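/- arXiv:2604.20139 — 7 statements merged into one kernel-verified Lean document; each statement's English description precedes it below -/
import Mathlib

section
/- Define P_{m,n}(k) = ∏_{j=1}^{m-1} (1 - k/(n-j)) for integers 1 ≤ m ≤ n and 0 ≤ k ≤ n - m. For integers r ≥ 1, L ≥ 1, θ ∈ (0,1) with L ≤ r·θ·n/m, m - 1 - r ≥ 0, and any integer t with 0 ≤ t < θ·n/m and (r+1)·θ·n/m ≤ n - t - L as well as t ≤ n - m and t ≤ (n-L) - (m-r), we have P_{m,n}(t) ≤ P_{m-r,n-L}(t). -/
open Finset

/-!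
Writing `P_{m,n}(t) = ∏_{j<m-1} (x - t - j)/(x - j)` with `x = n - 1`, both numerator and
denominator products are pieces of the falling factorial `∏_{k<m-1+t} (x - k)`; splitting it the
other way round gives `P_{m,n}(t) = ∏_{i<t} (n - m - i)/(n - 1 - i)`. After this swap both sides
of the inequality are products of `t` factors, and they can be compared factor by factor:
cross-multiplying, the `i`-th comparison reduces to `(m - 1) L ≤ r (n - 1 - i)`, which follows
from `L ≤ r θ n / m`, `t < θ n / m` and `θ < 1`.
-/

/-- `P_{m,n}(k) = ∏_{j=1}^{m-1} (1 - k/(n-j))`. -/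
noncomputable def Pmn (m n k : ℕ) : ℝ :=
  ∏ j ∈ Finset.Icc 1 (m - 1), (1 - (k : ℝ) / ((n : ℝ) - (j : ℝ)))

theorem prod_range_sub_mul_prod_range_sub {R : Type*} [CommRing R] (x : R) (a b : ℕ) :
    (∏ j ∈ range a, (x - b - j)) * ∏ i ∈ range b, (x - i) =
      (∏ i ∈ range b, (x - a - i)) * ∏ j ∈ range a, (x - j) := by
  have split (a b : ℕ) : (∏ j ∈ range a, (x - b - j)) * ∏ i ∈ range b, (x - i) =
      ∏ k ∈ range (b + a), (x - k) := by
    simp only [prod_range_add, Nat.cast_add, sub_sub, mul_comm]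
  rw [split, split, add_comm]

theorem prod_range_sub_div_comm {K : Type*} [Field K] {x : K} {a b : ℕ}
    (ha : ∀ j < a, x - j ≠ 0) (hb : ∀ i < b, x - i ≠ 0) :
    ∏ j ∈ range a, (x - b - j) / (x - j) = ∏ i ∈ range b, (x - a - i) / (x - i) := by
  rw [prod_div_distrib, prod_div_distrib,
    div_eq_div_iff (prod_ne_zero_iff.2 fun j hj => ha j (mem_range.1 hj))
      (prod_ne_zero_iff.2 fun i hi => hb i (mem_range.1 hi)),
    prod_range_sub_mul_prod_range_sub]

theorem Pmn_eq_prod_range {m n t : ℕ} (hm : 1 ≤ m) (h : m + t ≤ n) :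
    Pmn m n t = ∏ i ∈ range t, ((n : ℝ) - m - i) / (n - 1 - i) := by
  have hx (k : ℕ) (hk : k + 1 < n) : (n : ℝ) - 1 - k ≠ 0 := by
    have : (k : ℝ) + 1 < n := by exact_mod_cast hk
    linarith
  have swap := prod_range_sub_div_comm (x := (n : ℝ) - 1) (a := m - 1) (b := t)
    (fun j hj => hx j (by omega)) (fun i hi => hx i (by omega))
  rw [Pmn, ← Ico_add_one_right_eq_Icc, prod_Ico_eq_prod_range, Nat.add_sub_cancel]
  convert swap using 2 with j hj i hi
  · have hj' := mem_range.1 hj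
    rw [Nat.cast_add, Nat.cast_one, ← sub_sub, one_sub_div (hx j (by omega))]
    ring
  · push_cast [Nat.cast_sub hm]
    ring

theorem div_le_sub_div_sub {x p r L : ℝ} (hL : 0 ≤ L) (hxL : L < x) (h : p * L ≤ r * x) :
    (x - p) / x ≤ (x - L - (p - r)) / (x - L) := by
  rw [div_le_div_iff₀ (by linarith) (by linarith)]
  linarith [show (x - L - (p - r)) * x - (x - p) * (x - L) = r * x - p * L by ring]

theorem sub_one_mul_le_mul_sub {m r L t s n : ℝ} (hm : 1 ≤ m) (hr : 0 ≤ r) (hL : L ≤ r * s)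
    (ht : t ≤ s) (hs : m * s ≤ n) : (m - 1) * L ≤ r * (n - t) :=
  calc (m - 1) * L ≤ (m - 1) * (r * s) := mul_le_mul_of_nonneg_left hL (by linarith)
    _ = r * (m * s - s) := by ring
    _ ≤ r * (n - t) := mul_le_mul_of_nonneg_left (by linarith) hr

theorem Pmn_mono_general (m n r L t : ℕ) (θ : ℝ) (hθ1 : θ < 1)
    (hm : 1 ≤ m)
    (hLr : (L : ℝ) ≤ r * (θ * n / m)) (hmr : r ≤ m - 1)
    (ht : (t : ℝ) < θ * n / m)
    (htnm : t ≤ n - m) (htnL : t ≤ (n - L) - (m - r)) :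
    Pmn m n t ≤ Pmn (m - r) (n - L) t := by
  obtain rfl | ht0 := t.eq_zero_or_pos
  · simp [Pmn]
  have hm' : (1 : ℝ) ≤ m := by exact_mod_cast hm
  have hθn : m * (θ * n / m) ≤ n := by
    rw [mul_div_cancel₀ _ (by positivity)]
    exact mul_le_of_le_one_left n.cast_nonneg hθ1.le
  have hkey : ((m : ℝ) - 1) * L ≤ r * (n - t) :=
    sub_one_mul_le_mul_sub hm' r.cast_nonneg hLr ht.le hθn
  have hrm : r ≤ m := by omega
  rw [Pmn_eq_prod_range hm (by omega), Pmn_eq_prod_range (by omega) (by omega)]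
  push_cast [Nat.cast_sub hrm, Nat.cast_sub (by omega : L ≤ n)]
  have hmt : (m : ℝ) + t ≤ n := by exact_mod_cast (by omega : m + t ≤ n)
  have hLmrt : ((L + (m - r) + t : ℕ) : ℝ) ≤ n := by
    exact_mod_cast (by omega : L + (m - r) + t ≤ n)
  push_cast [Nat.cast_sub hrm] at hLmrt
  have hr1m : (r : ℝ) + 1 ≤ m := by exact_mod_cast (by omega : r + 1 ≤ m)
  refine prod_le_prod (fun i hi => ?_) (fun i hi => ?_) <;>
    have hit : (i : ℝ) + 1 ≤ t := by exact_mod_cast mem_range.1 hi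
  · exact div_nonneg (by linarith) (by linarith)
  calc ((n : ℝ) - m - i) / (n - 1 - i) = ((n - 1 - i) - (m - 1)) / (n - 1 - i) := by ring
    _ ≤ ((n - 1 - i) - L - ((m - 1) - r)) / ((n - 1 - i) - L) :=
      div_le_sub_div_sub L.cast_nonneg (by linarith)
        (hkey.trans (mul_le_mul_of_nonneg_left (by linarith) r.cast_nonneg))
    _ = (n - L - (m - r) - i) / (n - L - 1 - i) := by ring

/-- Monotonicity `P_{m,n}(t) ≤ P_{m-r,n-L}(t)` under the stated constraints. -/
theorem Pmn_mono (m n r L t : ℕ) (θ : ℝ) (hθ0 : 0 < θ) (hθ1 : θ < 1)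
    (hm : 1 ≤ m) (hmn : m ≤ n) (hr : 1 ≤ r) (hL : 1 ≤ L)
    (hLr : (L : ℝ) ≤ r * (θ * n / m)) (hmr : r ≤ m - 1)
    (ht : (t : ℝ) < θ * n / m)
    (hcap : (r + 1 : ℝ) * (θ * n / m) ≤ (n : ℝ) - t - L)
    (htnm : t ≤ n - m) (htnL : t ≤ (n - L) - (m - r)) :
    Pmn m n t ≤ Pmn (m - r) (n - L) t :=
  Pmn_mono_general m n r L t θ hθ1 hm hLr hmr ht htnm htnL
end

section
/- Fix β > e. There exists a constant C > 0 such that for all k ≥ 1, if S_k ~ Gamma(k,1), then P(S_k ≤ k/β) ≤ (C/√k) · exp(-k(1/β + ln β - 1)). -/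
/-!
On `[0, t]` with `t < k` one has `(k - t) x^(k-1) e^(-x) ≤ (k - x) x^(k-1) e^(-x)`, which is the
derivative of `x^k e^(-x)`. Integrating, `P(S_k ≤ t) ≤ k / (k - t) · t^k e^(-t) / k!`, the first
term of the Poisson tail up to a geometric factor. At `t = k/β` the factor is `β/(β-1)`, and
Stirling's bound `k! ≥ √(2πk) (k/e)^k` turns `(k/β)^k e^(-k/β) / k!` into
`exp(-k(1/β + log β - 1)) / √(2πk)`.
-/

open MeasureTheory Real Set ProbabilityTheory

section

variable {a r t : ℝ}

lemma hasDerivAt_rpow_mul_exp_neg_mul {x : ℝ} (hx : 0 < x) :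
    HasDerivAt (fun y => y ^ a * exp (-(r * y)))
      ((a - r * x) * (x ^ (a - 1) * exp (-(r * x)))) x := by
  have h : HasDerivAt (fun y => y ^ a * exp (-(r * y)))
      (a * x ^ (a - 1) * exp (-(r * x)) + x ^ a * (exp (-(r * x)) * -(r * 1))) x :=
    (hasDerivAt_rpow_const (Or.inl hx.ne')).fun_mul ((hasDerivAt_id' x).const_mul r).fun_neg.exp
  convert h using 1
  rw [rpow_sub_one hx.ne']
  field_simp
  ring

lemma intervalIntegrable_rpow_sub_one_mul_exp_neg_mul (ha : 0 < a) :
    IntervalIntegrable (fun x => x ^ (a - 1) * exp (-(r * x))) volume 0 t :=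
  (intervalIntegral.intervalIntegrable_rpow' (by linarith)).mul_continuousOn (by fun_prop)

/-- On `[0, t]` the integrand times `a - r t` is at most `(a - r x) x^(a-1) e^(-rx)`, the
derivative of `x^a e^(-rx)`. -/
lemma sub_mul_integral_rpow_sub_one_mul_exp_neg_mul_le (ha : 0 < a) (hr : 0 ≤ r) (ht : 0 ≤ t) :
    (a - r * t) * ∫ x in 0..t, x ^ (a - 1) * exp (-(r * x)) ≤ t ^ a * exp (-(r * t)) := by
  rw [← intervalIntegral.integral_const_mul]
  have h := intervalIntegral.integral_le_sub_of_hasDeriv_right_of_le ht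
    (g := fun y => y ^ a * exp (-(r * y)))
    ((continuous_rpow_const ha.le).mul (by fun_prop)).continuousOn
    (fun x hx => (hasDerivAt_rpow_mul_exp_neg_mul hx.1).hasDerivWithinAt)
    ((intervalIntegrable_iff_integrableOn_Icc_of_le ht).mp
      ((intervalIntegrable_rpow_sub_one_mul_exp_neg_mul ha).const_mul (a - r * t)))
    (fun x hx => mul_le_mul_of_nonneg_right (by nlinarith [hx.2])
      (mul_nonneg (rpow_nonneg hx.1.le _) (exp_pos _).le))
  simpa [zero_rpow ha.ne'] using h

lemma gammaMeasure_Iic_eq (ha : 0 < a) (hr : 0 ≤ r) (ht : 0 ≤ t) :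
    gammaMeasure a r (Iic t) =
      ENNReal.ofReal (r ^ a / Gamma a * ∫ x in 0..t, x ^ (a - 1) * exp (-(r * x))) := by
  have hint := (intervalIntegrable_rpow_sub_one_mul_exp_neg_mul (r := r) (t := t) ha).const_mul
    (r ^ a / Gamma a)
  rw [intervalIntegrable_iff_integrableOn_Icc_of_le ht] at hint
  rw [gammaMeasure, withDensity_apply _ measurableSet_Iic,
    lintegral_Iic_eq_lintegral_Iio_add_Icc _ ht, lintegral_gammaPDF_of_nonpos le_rfl, zero_add,
    setLIntegral_congr_fun measurableSet_Icc (fun x hx => gammaPDF_of_nonneg hx.1),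
    ← intervalIntegral.integral_const_mul, intervalIntegral.integral_of_le ht,
    ← integral_Icc_eq_integral_Ioc]
  simp_rw [mul_assoc]
  refine (ofReal_integral_eq_lintegral_ofReal hint ?_).symm
  filter_upwards [ae_restrict_mem measurableSet_Icc] with x hx
  exact mul_nonneg (div_nonneg (rpow_nonneg hr _) (Gamma_pos_of_pos ha).le)
    (mul_nonneg (rpow_nonneg hx.1 _) (exp_pos _).le)

lemma gammaMeasure_Iic_le (ha : 0 < a) (hr : 0 ≤ r) (ht : 0 ≤ t) (hrt : r * t < a) :
    gammaMeasure a r (Iic t) ≤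
      ENNReal.ofReal (r ^ a * t ^ a * exp (-(r * t)) / (Gamma a * (a - r * t))) := by
  rw [gammaMeasure_Iic_eq ha hr ht]
  refine ENNReal.ofReal_le_ofReal ?_
  have hI : ∫ x in 0..t, x ^ (a - 1) * exp (-(r * x)) ≤ t ^ a * exp (-(r * t)) / (a - r * t) := by
    rw [le_div_iff₀ (by linarith), mul_comm]
    exact sub_mul_integral_rpow_sub_one_mul_exp_neg_mul_le ha hr ht
  calc r ^ a / Gamma a * ∫ x in 0..t, x ^ (a - 1) * exp (-(r * x))
      ≤ r ^ a / Gamma a * (t ^ a * exp (-(r * t)) / (a - r * t)) := by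
        have := Gamma_pos_of_pos ha
        gcongr
    _ = r ^ a * t ^ a * exp (-(r * t)) / (Gamma a * (a - r * t)) := by
        rw [div_mul_div_comm, ← mul_assoc]

end

open Nat in
lemma gammaMeasure_natCast_Iic_le {k : ℕ} (hk : k ≠ 0) {t : ℝ} (ht : 0 ≤ t) (htk : t < k) :
    gammaMeasure k 1 (Iic t) ≤ ENNReal.ofReal (k / (k - t) * (t ^ k * exp (-t) / k !)) := by
  have hk0 : (0 : ℝ) < k := by positivity
  have hΓ : Gamma k * k = k ! := by
    rw [mul_comm, ← Gamma_add_one hk0.ne', Gamma_nat_eq_factorial]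
  convert gammaMeasure_Iic_le hk0 zero_le_one ht (by linarith) using 2
  rw [one_rpow, one_mul, one_mul, rpow_natCast, ← hΓ]
  field_simp

open Nat in
lemma pow_mul_exp_neg_div_factorial_le {k : ℕ} (hk : k ≠ 0) {β : ℝ} (hβ : 0 < β) :
    ((k : ℝ) / β) ^ k * exp (-(k / β)) / k ! ≤
      exp (-(k : ℝ) * (1 / β + log β - 1)) / √(2 * π * k) := by
  have hexp : exp (-(k : ℝ) * (1 / β + log β - 1)) = exp (-(k / β)) * (exp 1 / β) ^ k := by
    rw [← exp_log hβ, ← exp_sub, ← exp_nat_mul, ← exp_add, log_exp]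
    congr 1
    field_simp
    ring
  calc ((k : ℝ) / β) ^ k * exp (-(k / β)) / k !
      ≤ ((k : ℝ) / β) ^ k * exp (-(k / β)) / (√(2 * π * k) * (k / exp 1) ^ k) :=
        div_le_div_of_nonneg_left (by positivity) (by positivity) (Stirling.le_factorial_stirling k)
    _ = exp (-(k : ℝ) * (1 / β + log β - 1)) / √(2 * π * k) := by
        rw [hexp]
        field_simp
        rw [← mul_pow]
        field_simp

/-- For `β > e` there is `C > 0` with
`P(S_k ≤ k/β) ≤ (C/√k) exp(-k(1/β + ln β - 1))` for all `k ≥ 1`,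
where `S_k ~ Gamma(k,1)`. -/
theorem gamma_tail_upper (β : ℝ) (hβ : Real.exp 1 < β) :
    ∃ C : ℝ, 0 < C ∧ ∀ k : ℕ, 1 ≤ k →
      ProbabilityTheory.gammaMeasure k 1 (Set.Iic ((k : ℝ) / β)) ≤
        ENNReal.ofReal
          (C / Real.sqrt k * Real.exp (-(k : ℝ) * (1 / β + Real.log β - 1))) := by
  have hβ1 : 1 < β := (one_lt_exp_iff.mpr one_pos).trans hβ
  have hβ0 : 0 < β := zero_lt_one.trans hβ1
  refine ⟨β / (β - 1) / √(2 * π), by have := sub_pos.mpr hβ1; positivity, fun k hk => ?_⟩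
  have hk_ne : k ≠ 0 := Nat.one_le_iff_ne_zero.mp hk
  have hk0 : (0 : ℝ) < k := by positivity
  have hratio : (k : ℝ) / (k - k / β) = β / (β - 1) := by field_simp
  refine (gammaMeasure_natCast_Iic_le hk_ne (by positivity) (div_lt_self hk0 hβ1)).trans
    (ENNReal.ofReal_le_ofReal ?_)
  calc (k : ℝ) / (k - k / β) * ((k / β) ^ k * exp (-(k / β)) / k.factorial)
      ≤ β / (β - 1) * (exp (-(k : ℝ) * (1 / β + log β - 1)) / √(2 * π * k)) := by
        rw [hratio]
        exact mul_le_mul_of_nonneg_left (pow_mul_exp_neg_div_factorial_le hk_ne hβ0)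
          (div_nonneg hβ0.le (sub_pos.mpr hβ1).le)
    _ = β / (β - 1) / √(2 * π) / √k * exp (-(k : ℝ) * (1 / β + log β - 1)) := by
        rw [sqrt_mul (by positivity)]
        ring
end

section
/- Fix β > e. There exists a constant c > 0 such that for all sufficiently large k, if S_k ~ Gamma(k,1) and w = k/β - ln(1+4k), then P(S_k ∈ [w-1, w]) ≥ c · k^{-1/2-β} · exp(-k(1/β + ln β - 1)). -/
open MeasureTheory Real

/-!
On the window `[w - 1, w]`, which has length `1`, the `Gamma(k, 1)` density is at least
`(w - 1) ^ (k - 1) * exp (-w) / (k - 1)!`. Write `w - 1 = (k / β) (1 - P / k)` with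
`P = β (log (1 + 4k) + 1) = O(log k)`: for large `k`, `(1 - P / k) ^ (k - 1) ≥ exp (-P - 1)`,
and `exp (-P) * (1 + 4k) ≥ exp (-β) * (5k) ^ (-β)`. Together with the Stirling bound
`(k - 1)! ≤ e k ^ (k - 1/2) exp (-k)` this gives the claim with
`c = β exp (-(β + 2)) 5 ^ (-β)`.
-/

open ProbabilityTheory Set Filter Asymptotics
open scoped Nat

lemma ofReal_mul_le_gammaMeasure_Icc {a r A W : ℝ} (ha : 1 ≤ a) (hr : 0 < r) (hA : 0 ≤ A)
    (hAW : A ≤ W) :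
    ENNReal.ofReal ((W - A) * (r ^ a / Gamma a * A ^ (a - 1) * exp (-(r * W)))) ≤
      gammaMeasure a r (Icc A W) := by
  rw [gammaMeasure, withDensity_apply _ measurableSet_Icc, ENNReal.ofReal_mul (by linarith),
    ← Real.volume_Icc, mul_comm, ← setLIntegral_const]
  refine setLIntegral_mono (measurable_gammaPDFReal a r).ennreal_ofReal fun x ⟨hAx, hxW⟩ => ?_
  have hx : 0 ≤ x := hA.trans hAx
  have hΓ := Gamma_pos_of_pos (zero_lt_one.trans_le ha)
  rw [gammaPDF_of_nonneg hx]
  gcongr ENNReal.ofReal (_ * ?_ ^ _ * exp (-(r * ?_)))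

theorem Stirling.log_factorial_le_stirling {n : ℕ} (hn : n ≠ 0) :
    log n ! ≤ n * log n - n + log n / 2 + 1 := by
  obtain ⟨m, rfl⟩ := Nat.exists_eq_succ_of_ne_zero hn
  have hseq : stirlingSeq (m + 1) ≤ exp 1 / √2 := by
    simpa using stirlingSeq'_antitone (Nat.zero_le m)
  have hlog := log_le_log (stirlingSeq'_pos m) hseq
  rw [log_stirlingSeq_formula, log_div (exp_pos 1).ne' (by positivity), log_exp,
    log_sqrt zero_le_two, log_mul two_ne_zero (by positivity),
    log_div (by positivity) (exp_pos 1).ne', log_exp] at hlog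
  linarith

lemma Real.log_Gamma_nat_le {n : ℕ} (hn : n ≠ 0) :
    log (Gamma n) ≤ (n - 1 / 2) * log n - n + 1 := by
  obtain ⟨m, rfl⟩ := Nat.exists_eq_succ_of_ne_zero hn
  have h := Stirling.log_factorial_le_stirling hn
  rw [Nat.factorial_succ, Nat.cast_mul, log_mul (by positivity) (by positivity)] at h
  rw [Nat.cast_succ, Gamma_nat_eq_factorial]
  push_cast at h ⊢
  linarith

lemma neg_sub_one_le_mul_log_one_sub_div {n P : ℝ} (hn : 0 < n) (hP : 0 ≤ P)
    (h : P * (P + 1) ≤ n) : -P - 1 ≤ n * log (1 - P / n) := by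
  have hnP : 0 < n - P := by nlinarith
  have hlog := one_sub_inv_le_log_of_pos (show 0 < 1 - P / n by rw [one_sub_div hn.ne']; positivity)
  have hsq : P ^ 2 / (n - P) ≤ 1 := by rw [div_le_one hnP]; nlinarith
  have hexpand : n * (1 - (1 - P / n)⁻¹) = -P - P ^ 2 / (n - P) := by field_simp; ring
  nlinarith

lemma sub_le_mul_log_div_sub {K β M : ℝ} (hK : 1 ≤ K) (hβ : 0 < β) (hM : 0 ≤ M)
    (h : β * M * (β * M + 1) ≤ K) :
    (K - 1) * log (K / β) - β * M - 1 ≤ (K - 1) * log (K / β - M) := by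
  have hK0 : 0 < K := zero_lt_one.trans_le hK
  have hx := neg_sub_one_le_mul_log_one_sub_div hK0 (by positivity) h
  have hx1 : 0 < 1 - β * M / K := by
    rw [sub_pos, div_lt_one hK0]; nlinarith
  have hsplit : K / β - M = K / β * (1 - β * M / K) := by field_simp
  have hnonpos : log (1 - β * M / K) ≤ 0 :=
    log_nonpos hx1.le (by linarith [show 0 ≤ β * M / K by positivity])
  rw [hsplit, log_mul (by positivity) hx1.ne']
  nlinarith

lemma eventually_mul_log_sq_le (C : ℝ) :
    ∀ᶠ x : ℝ in atTop, C * (log (1 + 4 * x) + 1) ^ 2 ≤ x := by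
  -- `log (1 + 4x) + 1 = log (e (1 + 4x))`, and `log² y = o(y)`
  have hlin : Tendsto (fun x : ℝ => exp 1 * (1 + 4 * x)) atTop atTop := by
    refine Tendsto.const_mul_atTop (exp_pos 1) (tendsto_atTop_add_const_left _ _ ?_)
    exact tendsto_id.const_mul_atTop (by norm_num)
  have hO : (fun x : ℝ => exp 1 * (1 + 4 * x)) =O[atTop] id :=
    ((isLittleO_const_id_atTop (1 : ℝ)).isBigO.add
      ((isBigO_refl id atTop).const_mul_left 4)).const_mul_left _
  have ho := (((isLittleO_pow_log_id_atTop (n := 2)).comp_tendsto hlin).trans_isBigO hO)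
    |>.const_mul_left C
  filter_upwards [ho.bound one_pos, eventually_ge_atTop 0] with x hx hx0
  rw [Function.comp_apply, log_mul (exp_pos 1).ne' (by positivity), log_exp, Real.norm_eq_abs,
    Real.norm_eq_abs, id, abs_of_nonneg hx0, one_mul, add_comm] at hx
  exact (le_abs_self _).trans hx

lemma eventually_window_large {β : ℝ} (hβ : 0 ≤ β) :
    ∀ᶠ k : ℕ in atTop,
      β * (log (1 + 4 * k) + 1) * (β * (log (1 + 4 * k) + 1) + 1) ≤ k := by
  filter_upwards [tendsto_natCast_atTop_atTop.eventually (eventually_mul_log_sq_le ((β + 1) ^ 2))]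
    with k hk
  have hL : 0 ≤ log (1 + 4 * (k : ℝ)) := log_nonneg (by linarith [k.cast_nonneg (α := ℝ)])
  calc _ ≤ ((β + 1) * (log (1 + 4 * k) + 1)) * ((β + 1) * (log (1 + 4 * k) + 1)) :=
        mul_le_mul (by nlinarith) (by nlinarith) (by positivity) (by positivity)
    _ = (β + 1) ^ 2 * (log (1 + 4 * k) + 1) ^ 2 := by ring
    _ ≤ k := hk

lemma gammaDensity_window_ge {β : ℝ} (hβ : 0 < β) {k : ℕ} (hk : k ≠ 0)
    (hlarge : β * (log (1 + 4 * k) + 1) * (β * (log (1 + 4 * k) + 1) + 1) ≤ k)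
    (hpos : 0 < k / β - log (1 + 4 * k) - 1) :
    β * exp (-(β + 2)) * 5 ^ (-β) * (k : ℝ) ^ (-(1 : ℝ) / 2 - β) *
        exp (-(k : ℝ) * (1 / β + log β - 1)) ≤
      (k / β - log (1 + 4 * k) - 1) ^ ((k : ℝ) - 1) * exp (-(k / β - log (1 + 4 * k))) /
        Gamma k := by
  set L := log (1 + 4 * (k : ℝ))
  have hk1 : (1 : ℝ) ≤ k := Nat.one_le_cast.2 (Nat.one_le_iff_ne_zero.2 hk)
  have hk0 : (0 : ℝ) < k := zero_lt_one.trans_le hk1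
  have hL0 : 0 ≤ L := log_nonneg (by linarith)
  have hL5 : L ≤ log 5 + log k := by
    rw [← log_mul (by norm_num) hk0.ne']
    exact log_le_log (by linarith) (by linarith)
  have hA := sub_le_mul_log_div_sub hk1 hβ (by linarith) hlarge
  rw [← sub_sub, log_div hk0.ne' hβ.ne'] at hA
  have hΓ := log_Gamma_nat_le hk
  have hΓpos : 0 < Gamma k := Gamma_pos_of_pos hk0
  have hlhs : log (β * exp (-(β + 2)) * 5 ^ (-β) * (k : ℝ) ^ (-(1 : ℝ) / 2 - β) *
      exp (-(k : ℝ) * (1 / β + log β - 1))) =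
      log β - (β + 2) - β * log 5 + (-(1 : ℝ) / 2 - β) * log k - k / β - k * log β + k := by
    rw [log_mul (by positivity) (exp_pos _).ne', log_exp, log_mul (by positivity) (by positivity),
      log_rpow hk0, log_mul (by positivity) (by positivity), log_rpow (by norm_num),
      log_mul hβ.ne' (exp_pos _).ne', log_exp]
    ring
  have hrhs : log ((k / β - L - 1) ^ ((k : ℝ) - 1) * exp (-(k / β - L)) / Gamma k) =
      (k - 1) * log (k / β - L - 1) - (k / β - L) - log (Gamma k) := by
    rw [log_div (by positivity) hΓpos.ne', log_mul (by positivity) (exp_pos _).ne',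
      log_rpow hpos, log_exp]
    ring
  rw [← log_le_log_iff (by positivity) (by positivity), hlhs, hrhs]
  have hβL : β * L ≤ β * (log 5 + log k) := mul_le_mul_of_nonneg_left hL5 hβ.le
  linarith

lemma gammaMeasure_window_ge {β : ℝ} (hβ : 0 < β) {k : ℕ} (hk : k ≠ 0)
    (hlarge : β * (log (1 + 4 * k) + 1) * (β * (log (1 + 4 * k) + 1) + 1) ≤ k) :
    ENNReal.ofReal (β * exp (-(β + 2)) * 5 ^ (-β) * (k : ℝ) ^ (-(1 : ℝ) / 2 - β) *
        exp (-(k : ℝ) * (1 / β + log β - 1))) ≤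
      gammaMeasure k 1 (Icc (k / β - log (1 + 4 * k) - 1) (k / β - log (1 + 4 * k))) := by
  have hk1 : (1 : ℝ) ≤ k := Nat.one_le_cast.2 (Nat.one_le_iff_ne_zero.2 hk)
  have hpos : 0 < k / β - log (1 + 4 * k) - 1 := by
    have : 0 ≤ log (1 + 4 * (k : ℝ)) := log_nonneg (by linarith)
    rw [sub_sub, sub_pos, lt_div_iff₀ hβ]
    nlinarith
  refine (ENNReal.ofReal_le_ofReal (gammaDensity_window_ge hβ hk hlarge hpos)).trans ?_
  refine Eq.trans_le ?_
    (ofReal_mul_le_gammaMeasure_Icc hk1 one_pos hpos.le (sub_le_self _ zero_le_one))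
  rw [sub_sub_cancel, one_rpow, one_mul, one_mul]
  congr 1
  ring

/-- For `β > e` there is `c > 0` such that for all large `k`, with
`w = k/β - ln(1+4k)`, `P(S_k ∈ [w-1, w]) ≥ c k^{-1/2-β} exp(-k(1/β + ln β - 1))`,
where `S_k ~ Gamma(k,1)`. -/
theorem gamma_window_lower (β : ℝ) (hβ : Real.exp 1 < β) :
    ∃ c : ℝ, 0 < c ∧ ∃ K : ℕ, ∀ k : ℕ, K ≤ k →
      ProbabilityTheory.gammaMeasure k 1
          (Set.Icc ((k : ℝ) / β - Real.log (1 + 4 * k) - 1)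
            ((k : ℝ) / β - Real.log (1 + 4 * k))) ≥
        ENNReal.ofReal
          (c * (k : ℝ) ^ (-(1 : ℝ) / 2 - β) *
            Real.exp (-(k : ℝ) * (1 / β + Real.log β - 1))) := by
  have hβ0 : 0 < β := (exp_pos 1).trans hβ
  refine ⟨β * exp (-(β + 2)) * 5 ^ (-β), by positivity, ?_⟩
  obtain ⟨K, hK⟩ := eventually_atTop.1 (eventually_window_large hβ0.le)
  exact ⟨max K 1, fun k hk =>
    gammaMeasure_window_ge hβ0 (by omega) (hK k (le_of_max_le_left hk))⟩
end

section
/- Fix β > e. Define J(β) = β(ln β - 1) and let π^{(k)}(n) denote the k-fold iterated parent of vertex n in a random recursive tree built by π(n) = ⌊n U_n⌋ with i.i.d. uniform U_n. There is a constant C > 0 (depending only on β) such that for all k ≥ 1 and n ≥ 1, P(π^{(k)}(n) ≥ n e^{-k/β}) ≤ (C/√k)·exp(-k(1/β + ln β - 1)). -/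
open MeasureTheory Real

/-- `parentIter ω k x` is the `k`-fold iterated parent `π^{(k)}(x)` in the random
recursive tree built from uniforms `ω`, where `π(m) = ⌊m ω_m⌋`. -/
noncomputable def parentIter (ω : ℕ → ℝ) : ℕ → ℕ → ℕ
  | 0, x => x
  | k + 1, x => parentIter ω k ⌊(x : ℝ) * ω x⌋₊

/-!
Since `π(m) = ⌊m U_m⌋ ≤ m U_m` and the vertices on the ancestral line of `n` are distinct, the
event `π^{(k)}(n) ≥ n e^{-t}` forces `E_1 + ⋯ + E_k ≤ t` for independent standard exponentials
`E_i = -log U_i`; its probability is therefore at most the Erlang distribution function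
`F_k(t) = P(Poisson(t) ≥ k)`. The proof is an induction on `k` which conditions on the
uniform of the current vertex, using `F_{k+1}(L) = ∫₀¹ F_k(L + log x) dx`.

At `t = k/β < k` the Poisson tail is at most its first term `e^{-t} t^k / k!` times a geometric
series of ratio `1/β`, and Stirling's lower bound `k! ≥ √(2πk) (k/e)^k` turns that term into
`e^{-k(1/β + log β - 1)} / √(2πk)`.
-/

open Finset
open scoped Nat

noncomputable def expPartialSum (k : ℕ) (y : ℝ) : ℝ := ∑ j ∈ range k, y ^ j / j !

lemma expPartialSum_nonneg (k : ℕ) {y : ℝ} (hy : 0 ≤ y) : 0 ≤ expPartialSum k y :=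
  sum_nonneg fun _ _ => by positivity

lemma expPartialSum_succ_zero (k : ℕ) : expPartialSum (k + 1) 0 = 1 := by
  simp [expPartialSum, sum_range_succ']

lemma continuous_expPartialSum (k : ℕ) : Continuous (expPartialSum k) :=
  continuous_finsetSum _ fun _ _ => (continuous_pow _).div_const _

lemma hasDerivAt_expPartialSum_succ (k : ℕ) (y : ℝ) :
    HasDerivAt (expPartialSum (k + 1)) (expPartialSum k y) y := by
  have h : HasDerivAt (expPartialSum (k + 1)) (∑ j ∈ range (k + 1), (j * y ^ (j - 1)) / j !) y :=
    HasDerivAt.fun_sum fun j _ => (hasDerivAt_pow j y).div_const _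
  convert h using 1
  rw [sum_range_succ', expPartialSum]
  refine (add_eq_left.2 (by simp)).symm.trans (congrArg (· + _) (sum_congr rfl fun j _ => ?_))
  rw [Nat.factorial_succ]
  push_cast
  field_simp

lemma exp_sub_expPartialSum (k : ℕ) (y : ℝ) :
    exp y - expPartialSum k y = ∑' i, y ^ (i + k) / (i + k)! := by
  rw [exp_eq_exp_ℝ, ← (NormedSpace.expSeries_div_hasSum_exp y).tsum_eq,
    ← (Real.summable_pow_div_factorial y).sum_add_tsum_nat_add k, expPartialSum]
  ring

/-- `P(Poisson(y) ≥ k)`, the distribution function of a sum of `k` independent standard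
exponential variables. -/
noncomputable def erlangCDF (k : ℕ) (y : ℝ) : ℝ :=
  if 0 ≤ y then 1 - exp (-y) * expPartialSum k y else 0

lemma erlangCDF_of_nonneg (k : ℕ) {y : ℝ} (hy : 0 ≤ y) :
    erlangCDF k y = 1 - exp (-y) * expPartialSum k y := if_pos hy

lemma erlangCDF_nonneg (k : ℕ) (y : ℝ) : 0 ≤ erlangCDF k y := by
  unfold erlangCDF
  split_ifs with hy
  · have : exp (-y) * expPartialSum k y ≤ exp (-y) * exp y :=
      mul_le_mul_of_nonneg_left (sum_le_exp_of_nonneg hy k) (exp_nonneg _)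
    rw [← exp_add, neg_add_cancel, exp_zero] at this
    linarith
  · exact le_rfl

lemma erlangCDF_le_one (k : ℕ) (y : ℝ) : erlangCDF k y ≤ 1 := by
  unfold erlangCDF
  split_ifs with hy
  · linarith [mul_nonneg (exp_nonneg (-y)) (expPartialSum_nonneg k hy)]
  · exact zero_le_one

lemma measurable_erlangCDF (k : ℕ) : Measurable (erlangCDF k) :=
  Measurable.ite measurableSet_Ici
    (by have := (continuous_expPartialSum k).measurable; fun_prop) measurable_const

lemma integrable_erlangCDF_comp {α : Type*} [MeasurableSpace α] {μ : Measure α} [IsFiniteMeasure μ]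
    (k : ℕ) {g : α → ℝ} (hg : Measurable g) : Integrable (fun x => erlangCDF k (g x)) μ :=
  .of_bound ((measurable_erlangCDF k).comp hg).aestronglyMeasurable 1 <| ae_of_all _ fun x => by
    rw [norm_of_nonneg (erlangCDF_nonneg k _)]
    exact erlangCDF_le_one k _

lemma integral_erlangCDF_add_log_eq_zero (k : ℕ) {L b : ℝ} (hb0 : 0 ≤ b) (hb : b ≤ exp (-L)) :
    ∫ x in 0..b, erlangCDF k (L + log x) = 0 := by
  rw [intervalIntegral.integral_of_le hb0, integral_Ioc_eq_integral_Ioo]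
  refine setIntegral_eq_zero_of_forall_eq_zero fun x hx => if_neg ?_
  have : log x < -L := (log_lt_iff_lt_exp hx.1).2 (hx.2.trans_le hb)
  linarith

lemma hasDerivAt_sub_mul_expPartialSum_add_log (k : ℕ) (L : ℝ) {x : ℝ} (hx : 0 < x) :
    HasDerivAt (fun x => x - exp (-L) * expPartialSum (k + 1) (L + log x))
      (1 - exp (-(L + log x)) * expPartialSum k (L + log x)) x := by
  have hlog : HasDerivAt (fun x => L + log x) x⁻¹ x := (hasDerivAt_log hx.ne').const_add L
  refine ((hasDerivAt_id x).sub
    (((hasDerivAt_expPartialSum_succ k _).comp x hlog).const_mul (exp (-L)))).congr_deriv ?_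
  rw [neg_add, exp_add, exp_neg (log x), exp_log hx]
  ring

lemma integral_erlangCDF_add_log (k : ℕ) (L : ℝ) :
    ∫ x in 0..1, erlangCDF k (L + log x) = erlangCDF (k + 1) L := by
  rcases lt_or_ge L 0 with hL | hL
  · rw [integral_erlangCDF_add_log_eq_zero k zero_le_one (one_le_exp (by linarith)), erlangCDF,
      if_neg hL.not_ge]
  set a := exp (-L)
  have ha0 : 0 < a := exp_pos _
  have hint : ∀ u v, IntervalIntegrable (fun x => erlangCDF k (L + log x)) volume u v := fun u v =>
    IntegrableOn.intervalIntegrable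
      (integrable_erlangCDF_comp (μ := volume.restrict (Set.Icc (u ⊓ v) (u ⊔ v))) k (by fun_prop))
  rw [← intervalIntegral.integral_add_adjacent_intervals (hint 0 a) (hint a 1),
    integral_erlangCDF_add_log_eq_zero k ha0.le le_rfl, zero_add,
    intervalIntegral.integral_eq_sub_of_hasDerivAt
      (f := fun x => x - exp (-L) * expPartialSum (k + 1) (L + log x)) (fun x hx => ?_) (hint a 1)]
  · simp [a, erlangCDF_of_nonneg _ hL, expPartialSum_succ_zero]
  · rw [Set.uIcc_of_le (exp_le_one_iff.2 (by linarith))] at hx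
    have hx0 : 0 < x := ha0.trans_le hx.1
    have : -L ≤ log x := (le_log_iff_exp_le hx0).2 hx.1
    rw [erlangCDF_of_nonneg k (by linarith)]
    exact hasDerivAt_sub_mul_expPartialSum_add_log k L hx0

lemma erlangCDF_le_of_lt {t : ℝ} {k : ℕ} (ht : 0 ≤ t) (htk : t < k) :
    erlangCDF k t ≤ exp (-t) * (t ^ k / k !) / (1 - t / k) := by
  have hk : (0 : ℝ) < k := ht.trans_lt htk
  have hr : t / k < 1 := (div_lt_one hk).2 htk
  have hr0 : 0 ≤ t / k := by positivity
  have hterm : ∀ i, t ^ (i + k) / (i + k)! ≤ t ^ k / k ! * (t / k) ^ i := by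
    intro i
    have hfact : (k ! : ℝ) * k ^ i ≤ (i + k)! := by
      rw [add_comm i k]
      exact_mod_cast (Nat.mul_le_mul_left _ (Nat.pow_le_pow_left k.le_succ i)).trans
        Nat.factorial_mul_pow_le_factorial
    rw [div_pow, div_mul_div_comm, pow_add, mul_comm (t ^ i)]
    exact div_le_div_of_nonneg_left (by positivity) (by positivity) hfact
  calc erlangCDF k t = exp (-t) * ∑' i, t ^ (i + k) / (i + k)! := by
        rw [erlangCDF_of_nonneg k ht, ← exp_sub_expPartialSum, mul_sub, ← exp_add,
          neg_add_cancel, exp_zero]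
    _ ≤ exp (-t) * ∑' i, t ^ k / k ! * (t / k) ^ i := by
        refine mul_le_mul_of_nonneg_left ?_ (exp_nonneg _)
        have hsum := (Real.summable_pow_div_factorial t).comp_injective (add_left_injective k)
        exact hsum.tsum_le_tsum hterm ((summable_geometric_of_lt_one hr0 hr).mul_left _)
    _ = _ := by
        rw [tsum_mul_left, tsum_geometric_of_lt_one hr0 hr]
        ring

lemma exp_neg_mul_pow_div_factorial_le {t : ℝ} (ht : 0 < t) {k : ℕ} (hk : k ≠ 0) :
    exp (-t) * (t ^ k / k !) ≤ exp (k - t + k * log (t / k)) / √(2 * π * k) := by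
  have hk0 : (0 : ℝ) < k := by positivity
  have hexp : exp (k - t + k * log (t / k)) = exp (-t) * (exp 1 * (t / k)) ^ k := by
    rw [← exp_log (by positivity : 0 < exp 1 * (t / k)), ← exp_nat_mul, ← exp_add,
      log_mul (exp_pos 1).ne' (by positivity), log_exp]
    ring_nf
  calc exp (-t) * (t ^ k / k !) ≤ exp (-t) * (t ^ k / (√(2 * π * k) * (k / exp 1) ^ k)) := by
        gcongr
        exact Stirling.le_factorial_stirling k
    _ = _ := by
        rw [hexp, mul_pow, mul_div_assoc, div_pow, div_pow, exp_one_pow]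
        field_simp

lemma erlangCDF_self_div_le {β : ℝ} (hβ : 1 < β) {k : ℕ} (hk : k ≠ 0) :
    erlangCDF k (k / β) ≤
      (1 - 1 / β)⁻¹ / √(2 * π) / √k * exp (-k * (1 / β + log β - 1)) := by
  have hβ0 : 0 < β := by linarith
  have hk0 : (0 : ℝ) < k := by positivity
  have hratio : (k / β) / k = 1 / β := by field_simp
  have hlt : 1 / β < 1 := (div_lt_one hβ0).2 hβ
  calc erlangCDF k (k / β) ≤ exp (-(k / β)) * ((k / β) ^ k / k !) / (1 - 1 / β) := by
        rw [← hratio]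
        exact erlangCDF_le_of_lt (by positivity) (by rw [div_lt_iff₀ hβ0]; nlinarith)
    _ ≤ exp (k - k / β + k * log (1 / β)) / √(2 * π * k) / (1 - 1 / β) := by
        gcongr
        rw [← hratio]
        exact exp_neg_mul_pow_div_factorial_le (by positivity) hk
    _ = _ := by
        rw [one_div β, log_inv, sqrt_mul (by positivity)]
        field_simp
        ring_nf

def extendByZero {n : ℕ} (ω : Fin n → ℝ) (i : ℕ) : ℝ := if h : i < n then ω ⟨i, h⟩ else 0

lemma parentIter_zero_right (ω : ℕ → ℝ) (k : ℕ) : parentIter ω k 0 = 0 := by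
  induction k with
  | zero => rfl
  | succ k ih => simpa [parentIter] using ih

lemma parentIter_congr {ω ω' : ℕ → ℝ} {M : ℕ} (hω : ∀ i, ω i ≤ 1)
    (heq : ∀ i ≤ M, ω i = ω' i) (k : ℕ) : ∀ j ≤ M, parentIter ω k j = parentIter ω' k j := by
  induction k with
  | zero => exact fun _ _ => rfl
  | succ k ih =>
    intro j hj
    show parentIter ω k ⌊(j : ℝ) * ω j⌋₊ = parentIter ω' k ⌊(j : ℝ) * ω' j⌋₊
    rw [← heq j hj]
    refine ih _ ((Nat.floor_le_floor (mul_le_of_le_one_right j.cast_nonneg (hω j))).trans ?_)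
    rwa [Nat.floor_natCast]

lemma measurable_parentIter (k j : ℕ) : Measurable fun ω : ℕ → ℝ => parentIter ω k j := by
  induction k generalizing j with
  | zero => exact measurable_const
  | succ k ih =>
    exact (measurable_from_prod_countable_left (f := fun p : (ℕ → ℝ) × ℕ => parentIter p.1 k p.2)
      ih).comp
      (measurable_id.prodMk (Nat.measurable_floor.comp ((measurable_pi_apply j).const_mul _)))

lemma measurable_extendByZero (n : ℕ) : Measurable (extendByZero (n := n)) :=
  measurable_pi_lambda _ fun i => by
    unfold extendByZero
    split_ifs
    exacts [measurable_pi_apply _, measurable_const]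

lemma extendByZero_le_one {n : ℕ} {ω : Fin n → ℝ} (hω : ∀ i, ω i ≤ 1) (i : ℕ) :
    extendByZero ω i ≤ 1 := by
  unfold extendByZero
  split_ifs
  exacts [hω _, zero_le_one]

lemma floor_natCast_mul_lt {m : ℕ} (hm : m ≠ 0) {x : ℝ} (hx : x < 1) : ⌊m * x⌋₊ < m :=
  (Nat.floor_lt' hm).2 <| by simpa using mul_lt_mul_of_pos_left hx (by positivity : (0 : ℝ) < m)

lemma parentIter_extendByZero_insertNth {n : ℕ} {i : Fin (n + 1)} (hi : i ≠ 0) {x : ℝ}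
    (hx : x < 1) {y : Fin n → ℝ} (hy : ∀ j, y j ≤ 1) (k : ℕ) :
    parentIter (extendByZero (i.insertNth x y)) (k + 1) i =
      parentIter (extendByZero y) k ⌊i * x⌋₊ := by
  set ω := extendByZero (i.insertNth x y)
  have hωi : ω i = x := by simp [ω, extendByZero, i.isLt]
  have hω : ∀ j, ω j ≤ 1 := extendByZero_le_one <|
    (Fin.forall_iff_succAbove i).2 ⟨by simpa using hx.le, by simpa using hy⟩
  have hfloor : ⌊i * x⌋₊ < i := floor_natCast_mul_lt (Fin.val_ne_zero_iff.2 hi) hx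
  show parentIter ω k ⌊(i : ℝ) * ω i⌋₊ = _
  rw [hωi]
  refine parentIter_congr hω (fun j hj => ?_) k _ le_rfl
  have hji : j < i := hj.trans_lt hfloor
  have hjn : j < n := hji.trans_le (Nat.lt_succ_iff.1 i.isLt)
  have : (⟨j, by omega⟩ : Fin (n + 1)) = i.succAbove ⟨j, hjn⟩ :=
    (Fin.succAbove_of_castSucc_lt _ ⟨j, hjn⟩ hji).symm
  simp [ω, extendByZero, hjn, Nat.lt_succ_of_lt hjn, this]

noncomputable abbrev uniformCube (n : ℕ) : Measure (Fin n → ℝ) :=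
  Measure.pi fun _ => volume.restrict (Set.Icc (0 : ℝ) 1)

instance : IsProbabilityMeasure (volume.restrict (Set.Icc (0 : ℝ) 1)) :=
  ⟨by simp⟩

lemma ae_uniformCube_le_one (n : ℕ) : ∀ᵐ ω ∂uniformCube n, ∀ i, ω i ≤ 1 :=
  ae_all_iff.2 fun i => (Measure.tendsto_eval_ae_ae (i := i)
    (μ := fun _ : Fin n => volume.restrict (Set.Icc (0 : ℝ) 1))).eventually
    (p := fun x => x ≤ 1) <| (ae_restrict_mem measurableSet_Icc).mono fun _ hx => hx.2

lemma lintegral_ofReal_erlangCDF_add_log (k : ℕ) (L : ℝ) :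
    ∫⁻ x in Set.Ioo 0 1, ENNReal.ofReal (erlangCDF k (L + log x)) =
      ENNReal.ofReal (erlangCDF (k + 1) L) := by
  rw [← ofReal_integral_eq_lintegral_ofReal (integrable_erlangCDF_comp k (by fun_prop))
    (ae_of_all _ fun _ => erlangCDF_nonneg _ _), ← integral_erlangCDF_add_log,
    intervalIntegral.integral_of_le zero_le_one, integral_Ioc_eq_integral_Ioo]

lemma uniformCube_le_setLIntegral_of_slice {n : ℕ} (i : Fin (n + 1))
    {A : Set (Fin (n + 1) → ℝ)} (hA : MeasurableSet A) {f : ℝ → ENNReal}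
    (hf : ∀ x ∈ Set.Ioo (0 : ℝ) 1, uniformCube n {y | i.insertNth x y ∈ A} ≤ f x) :
    uniformCube (n + 1) A ≤ ∫⁻ x in Set.Ioo 0 1, f x := by
  let e := MeasurableEquiv.piFinSuccAbove (fun _ => ℝ) i
  calc uniformCube (n + 1) A
      = ((volume.restrict (Set.Icc 0 1)).prod (uniformCube n)) (e.symm ⁻¹' A) :=
        ((measurePreserving_piFinSuccAbove
          (fun _ : Fin (n + 1) => volume.restrict (Set.Icc (0 : ℝ) 1)) i).symm _
          |>.measure_preimage hA.nullMeasurableSet).symm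
    _ = ∫⁻ x in Set.Icc 0 1, uniformCube n {y | i.insertNth x y ∈ A} :=
        Measure.prod_apply (e.symm.measurable hA)
    _ ≤ ∫⁻ x in Set.Ioo 0 1, f x := by
        rw [← restrict_Ioo_eq_restrict_Icc]
        exact setLIntegral_mono' measurableSet_Ioo hf

/-- Allowing any `r ≥ m` in place of `m` lets the induction absorb `⌊m U⌋ ≤ m U`. -/
lemma uniformCube_le_parentIter_le_erlangCDF {c : ℝ} (hc : 0 < c) (k : ℕ) :
    ∀ {n m : ℕ}, m ≤ n → ∀ {r : ℝ}, (m : ℝ) ≤ r →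
      uniformCube (n + 1) {ω | c ≤ parentIter (extendByZero ω) k m} ≤
        ENNReal.ofReal (erlangCDF k (log (r / c))) := by
  induction k with
  | zero =>
    intro n m _ r hmr
    by_cases hcm : c ≤ m
    · rw [erlangCDF_of_nonneg 0 (log_nonneg ((one_le_div hc).2 (hcm.trans hmr))), expPartialSum,
        sum_range_zero, mul_zero, sub_zero, ENNReal.ofReal_one]
      exact prob_le_one
    · simp [parentIter, hcm]
  | succ k ih =>
    intro n m hmn r hmr
    rcases Nat.eq_zero_or_pos m with rfl | hm
    · simp [parentIter_zero_right, hc.not_ge]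
    obtain ⟨n, rfl⟩ : ∃ n', n = n' + 1 := ⟨n - 1, by omega⟩
    obtain ⟨i, rfl⟩ : ∃ i : Fin (n + 2), (i : ℕ) = m := ⟨⟨m, by omega⟩, rfl⟩
    have hi : i ≠ 0 := Fin.val_ne_zero_iff.1 hm.ne'
    have hr : 0 < r := (Nat.cast_pos.2 hm).trans_le hmr
    set A := {ω : Fin (n + 2) → ℝ | c ≤ parentIter (extendByZero ω) (k + 1) i}
    have hA : MeasurableSet A := measurableSet_le measurable_const <|
      measurable_from_nat.comp ((measurable_parentIter (k + 1) i).comp (measurable_extendByZero _))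
    have hslice : ∀ x ∈ Set.Ioo (0 : ℝ) 1, uniformCube (n + 1) {y | i.insertNth x y ∈ A} ≤
        ENNReal.ofReal (erlangCDF k (log (r / c) + log x)) := by
      intro x hx
      calc _ ≤ uniformCube (n + 1) {y | c ≤ parentIter (extendByZero y) k ⌊i * x⌋₊} := by
            refine measure_mono_ae ((ae_uniformCube_le_one _).mono fun y hy hyA => ?_)
            change c ≤ (parentIter (extendByZero (i.insertNth x y)) (k + 1) i : ℝ) at hyA
            rwa [parentIter_extendByZero_insertNth hi hx.2 hy] at hyA
        _ ≤ ENNReal.ofReal (erlangCDF k (log (r * x / c))) := by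
            refine ih ?_ ((Nat.floor_le (mul_nonneg i.val.cast_nonneg hx.1.le)).trans
              (mul_le_mul_of_nonneg_right hmr hx.1.le))
            have := floor_natCast_mul_lt hm.ne' hx.2
            omega
        _ = _ := by rw [mul_div_right_comm, log_mul (by positivity) hx.1.ne']
    exact (uniformCube_le_setLIntegral_of_slice i hA hslice).trans_eq
      (lintegral_ofReal_erlangCDF_add_log k _)

/-- Fix `β > e`. There is `C > 0` (depending only on `β`) such that for all `k ≥ 1`
and `n ≥ 1`, `P(π^{(k)}(n) ≥ n e^{-k/β}) ≤ (C/√k) exp(-k(1/β + ln β - 1))`,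
where the parent maps are built from i.i.d. uniforms `U_0,…,U_n` on `[0,1]`. -/
theorem iterated_parent_upper_tail (β : ℝ) (hβ : Real.exp 1 < β) :
    ∃ C : ℝ, 0 < C ∧ ∀ k : ℕ, 1 ≤ k → ∀ n : ℕ, 1 ≤ n →
      (Measure.pi fun _ : Fin (n + 1) => volume.restrict (Set.Icc (0 : ℝ) 1))
          {ω : Fin (n + 1) → ℝ |
            (n : ℝ) * Real.exp (-(k : ℝ) / β) ≤
              (parentIter (fun i => if h : i < n + 1 then ω ⟨i, h⟩ else 0) k n : ℝ)} ≤
        ENNReal.ofReal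
          (C / Real.sqrt k * Real.exp (-(k : ℝ) * (1 / β + Real.log β - 1))) := by
  have hβ1 : 1 < β := (one_lt_exp_iff.2 one_pos).trans hβ
  have hC : 0 < 1 - 1 / β := sub_pos.2 ((div_lt_one (by linarith)).2 hβ1)
  refine ⟨(1 - 1 / β)⁻¹ / √(2 * π), by positivity, fun k hk n hn => ?_⟩
  have hc : 0 < (n : ℝ) * exp (-(k : ℝ) / β) := by positivity
  have hlog : log (n / (n * exp (-(k : ℝ) / β))) = k / β := by
    rw [div_mul_cancel_left₀ (by positivity), log_inv, log_exp, neg_div, neg_neg]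
  calc _ ≤ ENNReal.ofReal (erlangCDF k (log (n / (n * exp (-(k : ℝ) / β))))) :=
        uniformCube_le_parentIter_le_erlangCDF hc k le_rfl le_rfl
    _ ≤ _ := by
        rw [hlog]
        exact ENNReal.ofReal_le_ofReal (erlangCDF_self_div_le hβ1 (by omega))
end

section
/- Let A_k(n) denote the number of increasing trees on n labeled vertices with height at most k. For every integer k ≥ 3 there is a constant C_k such that for all sufficiently large n, A_k(n) ≥ exp(n ln n - n ln^{(k)}(n) - C_k n), where ln^{(k)} is the k-fold iterated logarithm. -/
/-!
A tree of height at most `k + 1` on `n` vertices arises by taking a tree of height at most `k`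
on the first `m` vertices and hanging each of the remaining `n - m` vertices from one of those
`m`, so `A_{k+1}(n) ≥ A_k(m) m^{n-m}`. With `m = ⌈n / ln^{(k)} n⌉` one has
`ln m ≥ ln n - ln^{(k+1)} n` and `m ln^{(k)} m ≤ 2n`, so the bound for `k` with constant `C`
gives the bound for `k + 1` with constant `C + 2`. The induction starts at `k = 1`, where the
star shows `A_1(n) ≥ 1`.
-/

open Finset Filter Real

/-- Depth of vertex `i` in the tree encoded by the parent map `p`. -/
def treeDepth (p : ℕ → ℕ) (i : ℕ) : ℕ :=
  if h : p i < i then treeDepth p (p i) + 1 else 0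
termination_by i
decreasing_by exact h

/-- `p` encodes a recursive tree on vertices `0, …, n-1`: every nonroot vertex has a
parent with smaller index (and `p` is trivial outside). Each such map is equally
likely, giving the random recursive tree on `n` vertices. -/
def IsParentMap (n : ℕ) (p : ℕ → ℕ) : Prop :=
  (∀ i, 0 < i → i < n → p i < i) ∧ (∀ i, i = 0 ∨ n ≤ i → p i = 0)

/-- Height of the recursive tree on `n` vertices encoded by `p`. -/
def rrtHeight (n : ℕ) (p : ℕ → ℕ) : ℕ := (Finset.range n).sup (treeDepth p)

/-- Probability of an event under the uniform distribution on recursive trees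
with `n` vertices (there are `(n-1)!` of them). -/
noncomputable def rrtProb (n : ℕ) (P : (ℕ → ℕ) → Prop) : ℝ :=
  (Nat.card {p : ℕ → ℕ // IsParentMap n p ∧ P p} : ℝ) / (n - 1).factorial

/-- `A_k(n)`: the number of increasing trees on `n` vertices with height at most `k`
(encoded by parent maps on `{0,…,n-1}` with decreasing parents). -/
noncomputable def Akn (k n : ℕ) : ℕ :=
  Nat.card {p : ℕ → ℕ // IsParentMap n p ∧ rrtHeight n p ≤ k}

lemma treeDepth_of_lt {p : ℕ → ℕ} {i : ℕ} (h : p i < i) :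
    treeDepth p i = treeDepth p (p i) + 1 := by
  rw [treeDepth, dif_pos h]

lemma treeDepth_of_not_lt {p : ℕ → ℕ} {i : ℕ} (h : ¬p i < i) : treeDepth p i = 0 := by
  rw [treeDepth, dif_neg h]

lemma treeDepth_congr {p q : ℕ → ℕ} {i : ℕ} (h : ∀ j ≤ i, p j = q j) :
    treeDepth p i = treeDepth q i := by
  induction i using Nat.strong_induction_on with
  | _ i ih =>
    by_cases hlt : p i < i
    · have hq : q i < i := h i le_rfl ▸ hlt
      rw [treeDepth_of_lt hlt, treeDepth_of_lt hq, h i le_rfl,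
        ih (q i) hq fun j hj => h j (hj.trans hq.le)]
    · rw [treeDepth_of_not_lt hlt, treeDepth_of_not_lt (h i le_rfl ▸ hlt)]

lemma IsParentMap.apply_le {n : ℕ} {p : ℕ → ℕ} (hp : IsParentMap n p) (i : ℕ) : p i ≤ i := by
  by_cases hi : 0 < i ∧ i < n
  · exact (hp.1 i hi.1 hi.2).le
  · rw [hp.2 i (by omega)]
    exact i.zero_le

instance finite_isParentMap (n : ℕ) (Q : (ℕ → ℕ) → Prop) :
    Finite {p : ℕ → ℕ // IsParentMap n p ∧ Q p} := by
  refine Finite.of_injective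
    (fun p (i : Fin n) => (⟨p.1 i, (p.2.1.apply_le i).trans_lt i.2⟩ : Fin n)) ?_
  intro p q hpq
  ext i
  by_cases hi : i < n
  · exact congrArg Fin.val (congrFun hpq ⟨i, hi⟩)
  · rw [p.2.1.2 i (Or.inr (not_lt.1 hi)), q.2.1.2 i (Or.inr (not_lt.1 hi))]

/-- The tree on `n` vertices whose restriction to the first `m` vertices is `q` and in which
vertex `m + j` hangs from vertex `f j`. -/
def graft (m n : ℕ) (q : ℕ → ℕ) (f : Fin (n - m) → Fin m) (i : ℕ) : ℕ :=
  if i < m then q i else if h : m ≤ i ∧ i < n then f ⟨i - m, by omega⟩ else 0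

section graft

variable {m n : ℕ} {q : ℕ → ℕ} {f : Fin (n - m) → Fin m}

lemma graft_of_lt {i : ℕ} (hi : i < m) : graft m n q f i = q i := if_pos hi

lemma graft_add (j : Fin (n - m)) : graft m n q f (m + j) = f j := by
  have hj := j.2
  rw [graft, if_neg (by omega), dif_pos (by omega)]
  congr
  omega

lemma graft_lt_of_le {i : ℕ} (hmi : m ≤ i) (hin : i < n) : graft m n q f i < m := by
  rw [graft, if_neg (by omega), dif_pos ⟨hmi, hin⟩]
  exact Fin.isLt _

lemma treeDepth_graft_of_lt {i : ℕ} (hi : i < m) :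
    treeDepth (graft m n q f) i = treeDepth q i :=
  treeDepth_congr fun _ hj => graft_of_lt (hj.trans_lt hi)

lemma isParentMap_graft (hm : 0 < m) (hmn : m ≤ n) (hq : IsParentMap m q) :
    IsParentMap n (graft m n q f) := by
  refine ⟨fun i hi hin => ?_, fun i hi => ?_⟩
  · by_cases him : i < m
    · rw [graft_of_lt him]
      exact hq.1 i hi him
    · exact (graft_lt_of_le (not_lt.1 him) hin).trans_le (not_lt.1 him)
  · rcases hi with rfl | hni
    · rw [graft_of_lt hm, hq.2 0 (Or.inl rfl)]
    · rw [graft, if_neg (by omega), dif_neg (by omega)]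

lemma rrtHeight_graft_le {k : ℕ} (hq : rrtHeight m q ≤ k) :
    rrtHeight n (graft m n q f) ≤ k + 1 := by
  have hdepth : ∀ i < m, treeDepth q i ≤ k := fun i hi =>
    (Finset.le_sup (f := treeDepth q) (Finset.mem_range.2 hi)).trans hq
  refine Finset.sup_le fun i hi => ?_
  by_cases him : i < m
  · rw [treeDepth_graft_of_lt him]
    exact (hdepth i him).trans k.le_succ
  · have hpi := graft_lt_of_le (q := q) (f := f) (not_lt.1 him) (Finset.mem_range.1 hi)
    rw [treeDepth_of_lt (hpi.trans_le (not_lt.1 him)), treeDepth_graft_of_lt hpi]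
    exact Nat.succ_le_succ (hdepth _ hpi)

lemma graft_inj {q' : ℕ → ℕ} {f' : Fin (n - m) → Fin m} (hq : IsParentMap m q)
    (hq' : IsParentMap m q') (h : graft m n q f = graft m n q' f') : q = q' ∧ f = f' := by
  refine ⟨funext fun i => ?_, funext fun j => Fin.ext ?_⟩
  · by_cases hi : i < m
    · rw [← graft_of_lt (q := q) (f := f) hi, ← graft_of_lt (q := q') (f := f') hi, h]
    · rw [hq.2 i (Or.inr (not_lt.1 hi)), hq'.2 i (Or.inr (not_lt.1 hi))]
  · rw [← graft_add (q := q), ← graft_add (q := q'), h]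

end graft

theorem Akn_mul_pow_le {k m n : ℕ} (hm : 0 < m) (hmn : m ≤ n) :
    Akn k m * m ^ (n - m) ≤ Akn (k + 1) n := by
  let T (k n : ℕ) := {p : ℕ → ℕ // IsParentMap n p ∧ rrtHeight n p ≤ k}
  let g (x : T k m × (Fin (n - m) → Fin m)) : T (k + 1) n :=
    ⟨graft m n x.1.1 x.2, isParentMap_graft hm hmn x.1.2.1, rrtHeight_graft_le x.1.2.2⟩
  have hg : Function.Injective g := fun x y hxy => by
    obtain ⟨hq, hf⟩ := graft_inj x.1.2.1 y.1.2.1 (congrArg Subtype.val hxy)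
    exact Prod.ext (Subtype.ext hq) hf
  calc Akn k m * m ^ (n - m) = Nat.card (T k m × (Fin (n - m) → Fin m)) := by
        rw [Nat.card_prod, Nat.card_fun]; simp [Akn, T]
    _ ≤ Akn (k + 1) n := Nat.card_le_card_of_injective g hg

lemma one_le_Akn_zero_one : 1 ≤ Akn 0 1 := by
  have hstar : IsParentMap 1 (fun _ => 0) ∧ rrtHeight 1 (fun _ => 0) ≤ 0 := by
    refine ⟨⟨fun i hi hi1 => by omega, fun _ _ => rfl⟩, ?_⟩
    simp [rrtHeight, treeDepth_of_not_lt]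
  have : Nonempty {p : ℕ → ℕ // IsParentMap 1 p ∧ rrtHeight 1 p ≤ 0} := ⟨⟨_, hstar⟩⟩
  exact Nat.card_pos

lemma one_le_Akn_one {n : ℕ} (hn : 0 < n) : 1 ≤ Akn 1 n := by
  have := Akn_mul_pow_le (k := 0) one_pos hn
  rw [one_pow, mul_one] at this
  exact one_le_Akn_zero_one.trans this

section logIter

variable {k : ℕ} {a x y : ℝ}

lemma le_logIter (hx : exp^[k] a ≤ x) : a ≤ log^[k] x := by
  induction k generalizing x with
  | zero => exact hx
  | succ k ih =>
    rw [Function.iterate_succ_apply', ← le_log_iff_exp_le ((exp_pos _).trans_le hx)] at hx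
    exact ih hx

lemma logIter_le_logIter (hx : exp^[k] a ≤ x) (hxy : x ≤ y) : log^[k] x ≤ log^[k] y := by
  induction k generalizing x y with
  | zero => exact hxy
  | succ k ih =>
    rw [Function.iterate_succ_apply'] at hx
    have hx0 : 0 < x := (exp_pos _).trans_le hx
    exact ih ((le_log_iff_exp_le hx0).2 hx) (log_le_log hx0 hxy)

lemma logIter_le_self (hx : exp^[k] a ≤ x) : log^[k] x ≤ x := by
  induction k generalizing x with
  | zero => exact le_rfl
  | succ k ih =>
    rw [Function.iterate_succ_apply'] at hx
    have hx0 : 0 < x := (exp_pos _).trans_le hx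
    exact (ih ((le_log_iff_exp_le hx0).2 hx)).trans (log_le_self hx0.le)

lemma tendsto_div_logIter (hk : 1 ≤ k) :
    Tendsto (fun x => x / log^[k] x) atTop atTop := by
  obtain ⟨j, rfl⟩ := Nat.exists_eq_add_of_le' hk
  have hlog : Tendsto (fun x => x / log x) atTop atTop := by
    refine ((tendsto_exp_div_pow_atTop 1).comp tendsto_log_atTop).congr' ?_
    filter_upwards [eventually_gt_atTop 0] with x hx
    simp [exp_log hx]
  refine tendsto_atTop_mono' atTop ?_ hlog
  filter_upwards [eventually_ge_atTop (exp^[j + 1] 1)] with x hx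
  have hL : 1 ≤ log^[j + 1] x := le_logIter hx
  rw [Function.iterate_succ_apply'] at hx
  have hx0 : 0 < x := (exp_pos _).trans_le hx
  rw [Function.iterate_succ_apply] at hL ⊢
  exact div_le_div_of_nonneg_left hx0.le (by linarith)
    (logIter_le_self ((le_log_iff_exp_le hx0).2 hx))

end logIter

/-- In the induction step `M = ⌈x / log^[k] x⌉₊` is the size of the inner tree. -/
lemma exponent_succ_le {k : ℕ} {C x M : ℝ} (hC : 0 ≤ C) (hM : exp^[k] 1 ≤ M)
    (hMx : M ≤ x) (hlo : x / log^[k] x ≤ M) (hhi : M ≤ x / log^[k] x + 1) :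
    x * log x - x * log^[k + 1] x - (C + 2) * x ≤ x * log M - M * log^[k] M - C * M := by
  have hx : exp^[k] 1 ≤ x := hM.trans hMx
  have hx0 : 0 < x := (zero_lt_one.trans_le (le_logIter hx)).trans_le (logIter_le_self hx)
  have hL : 1 ≤ log^[k] x := le_logIter hx
  have hlogM : log x - log^[k + 1] x ≤ log M := by
    rw [Function.iterate_succ_apply', ← log_div hx0.ne' (by positivity)]
    exact log_le_log (by positivity) hlo
  have hLM : M * log^[k] M ≤ 2 * x := calc
    M * log^[k] M ≤ (x / log^[k] x + 1) * log^[k] x :=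
      mul_le_mul hhi (logIter_le_logIter hM hMx) (zero_le_one.trans (le_logIter hM))
        (by positivity)
    _ = x + log^[k] x := by field_simp
    _ ≤ 2 * x := by linarith [logIter_le_self hx]
  nlinarith [mul_le_mul_of_nonneg_left hMx hC, mul_le_mul_of_nonneg_left hlogM hx0.le]

theorem Akn_lower_bound_succ {k : ℕ} {C : ℝ} (hk : 1 ≤ k) (hC : 0 ≤ C)
    (h : ∀ᶠ m : ℕ in atTop, exp (m * log m - m * log^[k] m - C * m) ≤ Akn k m) :
    ∀ᶠ n : ℕ in atTop,
      exp (n * log n - n * log^[k + 1] n - (C + 2) * n) ≤ Akn (k + 1) n := by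
  obtain ⟨N, hN⟩ := eventually_atTop.1 h
  have hratio := (tendsto_div_logIter hk).comp tendsto_natCast_atTop_atTop
  filter_upwards [tendsto_natCast_atTop_atTop.eventually_ge_atTop (exp^[k] 1),
    hratio.eventually_ge_atTop (N : ℝ), hratio.eventually_ge_atTop (exp^[k] 1)]
    with n hn hNM hM
  simp only [Function.comp_apply] at hNM hM
  have hL : 1 ≤ log^[k] (n : ℝ) := le_logIter hn
  set M := ⌈(n : ℝ) / log^[k] n⌉₊
  have hlo : (n : ℝ) / log^[k] n ≤ M := Nat.le_ceil _
  have hn1 : 1 ≤ (n : ℝ) := hL.trans (logIter_le_self hn)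
  have hM0 : 0 < M := Nat.ceil_pos.2 (by positivity)
  have hMn : M ≤ n := Nat.ceil_le.2 (div_le_self (Nat.cast_nonneg _) hL)
  calc exp (n * log n - n * log^[k + 1] n - (C + 2) * n)
      ≤ exp (n * log M - M * log^[k] M - C * M) :=
        exp_le_exp.2 <| exponent_succ_le hC (hM.trans hlo) (Nat.cast_le.2 hMn) hlo
          (Nat.ceil_lt_add_one (by positivity)).le
    _ = exp (M * log M - M * log^[k] M - C * M) * M ^ (n - M) := by
        have hpow : (M : ℝ) ^ (n - M) = exp ((n - M : ℕ) * log M) := by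
          rw [exp_nat_mul, exp_log (by exact_mod_cast hM0)]
        rw [hpow, ← exp_add, Nat.cast_sub hMn]
        ring_nf
    _ ≤ Akn k M * M ^ (n - M) := by
        gcongr
        exact hN M (Nat.cast_le.1 (hNM.trans hlo))
    _ ≤ Akn (k + 1) n := by exact_mod_cast Akn_mul_pow_le hM0 hMn

theorem Akn_lower_bound {k : ℕ} (hk : 1 ≤ k) : ∃ C : ℝ, 0 ≤ C ∧
    ∀ᶠ n : ℕ in atTop, exp (n * log n - n * log^[k] n - C * n) ≤ Akn k n := by
  induction k, hk using Nat.le_induction with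
  | base =>
    refine ⟨0, le_rfl, ?_⟩
    filter_upwards [eventually_gt_atTop 0] with n hn
    simpa using one_le_Akn_one hn
  | succ k hk ih =>
    obtain ⟨C, hC, h⟩ := ih
    exact ⟨C + 2, by linarith, Akn_lower_bound_succ hk hC h⟩

/-- For every `k ≥ 3` there is `C_k` with
`A_k(n) ≥ exp(n ln n - n ln^{(k)} n - C_k n)` for all large `n`. -/
theorem increasing_trees_bounded_height_count (k : ℕ) (hk : 3 ≤ k) :
    ∃ C : ℝ, ∃ N : ℕ, ∀ n : ℕ, N ≤ n →
      (Akn k n : ℝ) ≥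
        Real.exp ((n : ℝ) * Real.log n - (n : ℝ) * Real.log^[k] n - C * n) := by
  obtain ⟨C, -, h⟩ := Akn_lower_bound (by omega : 1 ≤ k)
  exact ⟨C, eventually_atTop.1 h⟩
end

section
/- Let N be a large positive integer, s(N) = ⌊ln N⌋, d(N) = ⌊N/(s(N)+1)⌋, r(N) = N - d(N)(s(N)+1). The number P_N of ways to partition a set of N labeled elements into d(N) blocks, of which d(N)-1 have size s(N)+1 and one has size 1+s(N)+r(N) (with the formula splitting into the case r(N) = 0 where all d(N) blocks have size s(N)+1 counted with 1/d(N)! symmetry factor), satisfies ln P_N = N(ln N - ln ln N - 1 + o(1)) as N → ∞. -/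
open Filter Real

/-- `s(N) = ⌊ln N⌋`. -/
noncomputable def sFn (N : ℕ) : ℕ := ⌊Real.log N⌋₊

/-- `d(N) = ⌊N/(s(N)+1)⌋`. -/
noncomputable def dFn (N : ℕ) : ℕ := N / (sFn N + 1)

/-- `r(N) = N - d(N)(s(N)+1)`. -/
noncomputable def rFn (N : ℕ) : ℕ := N - dFn N * (sFn N + 1)

/-- The number `P_N` of partitions of `N` labeled elements into `d(N)` blocks,
`d(N)-1` of size `s(N)+1` and one of size `1+s(N)+r(N)` (with the symmetric
formula when `r(N)=0`). -/
noncomputable def PN (N : ℕ) : ℝ :=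
  if rFn N = 0 then
    (N.factorial : ℝ) / ((dFn N).factorial * ((sFn N + 1).factorial : ℝ) ^ dFn N)
  else
    (N.factorial : ℝ) /
      ((dFn N - 1).factorial * ((sFn N + 1).factorial : ℝ) ^ (dFn N - 1) *
        (1 + sFn N + rFn N).factorial)

/-!
Write `N = d S + r` with `S = ⌊log N⌋ + 1`, `d = ⌊N / S⌋` and `0 ≤ r < S`. Up to the odd
last block, which costs only `O(log² N)`, `log P_N` is `log (N! / (d! (S!)^d))`. Stirling's
formula with an `O(log n)` error turns this into `N log N - N log S - d log d`, up to
`O(log² N + (N / log N) log log N)`. Finally `d log d` differs from `(N/S) log (N/S)` by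
`O(log N)`, and since `log N < S ≤ log N + 1` we get
`(N/S) log (N/S) = N - O(N log log N / log N)` and `N log S = N log log N + O(N / log N)`.
-/

open scoped Nat Topology
open Asymptotics

lemma log_factorial_le (n : ℕ) : log n ! ≤ n * log n - n + log n / 2 + 1 := by
  rcases n with _ | m
  · simp
  have hlog : log (Stirling.stirlingSeq (m + 1)) ≤ log (Stirling.stirlingSeq 1) :=
    log_le_log (Stirling.stirlingSeq'_pos m) (Stirling.stirlingSeq'_antitone (Nat.zero_le m))
  rw [Stirling.log_stirlingSeq_formula, Stirling.stirlingSeq_one,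
    log_div (by positivity) (by positivity), log_exp, log_div (by positivity) (by positivity),
    log_exp, log_sqrt zero_le_two, log_mul two_ne_zero (by positivity)] at hlog
  linarith

lemma sub_le_log_factorial (n : ℕ) : n * log n - n ≤ log n ! := by
  rcases eq_or_ne n 0 with rfl | hn
  · simp
  have := Stirling.le_log_factorial_stirling hn
  have : 0 < log (2 * π) := log_pos (by linarith [pi_gt_three])
  linarith [log_natCast_nonneg n]

lemma abs_log_factorial_sub_le (n : ℕ) : |log n ! - (n * log n - n)| ≤ 1 + log n := by
  rw [abs_le]
  constructor <;> linarith [sub_le_log_factorial n, log_factorial_le n, log_natCast_nonneg n]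

lemma log_factorial_le_mul_log (n : ℕ) : log n ! ≤ n * log n := by
  rcases eq_or_ne n 0 with rfl | hn
  · simp
  rw [← log_pow]
  exact log_le_log (by positivity) (by exact_mod_cast Nat.factorial_le_pow n)

lemma mul_log_le_mul_log {x y : ℝ} (hy : 0 ≤ y) (hyx : y ≤ x) (hx : 1 ≤ x) :
    y * log y ≤ x * log x := by
  rcases hy.eq_or_lt with rfl | hy
  · simpa using mul_nonneg (by linarith) (log_nonneg hx)
  calc y * log y ≤ y * log x := by gcongr
    _ ≤ x * log x := by gcongr; exact log_nonneg hx

/-- The tangent line of the convex function `x log x` at `x` lies below its graph at `y`. -/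
lemma mul_log_sub_mul_log_le {x y : ℝ} (hy : 0 ≤ y) (hyx : y ≤ x) :
    x * log x - y * log y ≤ (x - y) * (1 + log x) := by
  rcases hy.eq_or_lt with rfl | hy
  · simp only [zero_mul, sub_zero]; nlinarith
  have h := log_le_sub_one_of_pos (div_pos (hy.trans_le hyx) hy)
  rw [log_div (by linarith) hy.ne'] at h
  have : y * (log x - log y) ≤ x - y := by
    calc y * (log x - log y) ≤ y * (x / y - 1) := by gcongr
      _ = x - y := by field_simp
  nlinarith

lemma log_sub_log_le_div {x y : ℝ} (hx : 0 < x) (hxy : x ≤ y) :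
    log y - log x ≤ (y - x) / x := by
  have h := log_le_sub_one_of_pos (div_pos (hx.trans_le hxy) hx)
  rw [log_div (by linarith) hx.ne'] at h
  calc log y - log x ≤ y / x - 1 := h
    _ = (y - x) / x := by field_simp

/-- For `N = d S` this is the logarithm of the number `N! / (d! (S!)^d)` of partitions of
`N` labelled points into `d` blocks of size `S`. -/
noncomputable def logBlockCount (N d S : ℕ) : ℝ := log N ! - log d ! - d * log S !

lemma abs_logBlockCount_sub_le {N d S r : ℕ} (hN : d * S + r = N) (hr : r < S) (hd : 0 < d) :
    |logBlockCount N d S - (N * log N - N * log S - d * log d)| ≤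
      (2 + S) * (1 + log N) + d * (2 + log S) := by
  have hS : 0 < S := by omega
  have hcast : (N : ℝ) = d * S + r := by exact_mod_cast hN.symm
  have hlogS : log S ≤ log N :=
    log_le_log (by exact_mod_cast hS) (by exact_mod_cast (by nlinarith : S ≤ N))
  have hlogd : log d ≤ log N :=
    log_le_log (by exact_mod_cast hd) (by exact_mod_cast (by nlinarith : d ≤ N))
  have hlogS₀ := log_natCast_nonneg S
  have hrS : (r : ℝ) ≤ S := by exact_mod_cast hr.le
  have hd₀ : (0 : ℝ) ≤ d := Nat.cast_nonneg d
  have eN := abs_le.1 (abs_log_factorial_sub_le N)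
  have ed := abs_le.1 (abs_log_factorial_sub_le d)
  have eS := abs_le.1 (abs_log_factorial_sub_le S)
  have key : logBlockCount N d S - (N * log N - N * log S - d * log d) =
      (log N ! - (N * log N - N)) - (log d ! - (d * log d - d))
        - d * (log S ! - (S * log S - S)) + d + r * (log S - 1) := by
    unfold logBlockCount; linear_combination (log S - 1) * hcast
  rw [key, abs_le]
  constructor <;>
    linarith [mul_le_mul_of_nonneg_left eS.1 hd₀, mul_le_mul_of_nonneg_left eS.2 hd₀,
      mul_le_mul hrS (by linarith : 1 + log S ≤ 1 + log N) (by linarith) (by positivity),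
      mul_nonneg (Nat.cast_nonneg r) hlogS₀, Nat.cast_nonneg (α := ℝ) r,
      mul_nonneg (Nat.cast_nonneg (α := ℝ) S) (log_natCast_nonneg N)]

lemma abs_div_mul_log_div_sub_mul_log_le {N d S r : ℕ} (hN : d * S + r = N) (hr : r < S)
    (hd : 0 < d) : |(N / S : ℝ) * log (N / S) - d * log d| ≤ 1 + log N := by
  have hS : (0 : ℝ) < S := by exact_mod_cast (show 0 < S by omega)
  have hcast : (N : ℝ) / S = d + r / S := by
    rw [← hN]; push_cast; field_simp
  have hfrac : (r : ℝ) / S ≤ 1 := (div_le_one hS).2 (by exact_mod_cast hr.le)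
  have hdx : (d : ℝ) ≤ N / S := by
    rw [hcast]; linarith [div_nonneg (Nat.cast_nonneg (α := ℝ) r) hS.le]
  have hx : (1 : ℝ) ≤ N / S := le_trans (by exact_mod_cast hd) hdx
  have hlogx : log (N / S : ℝ) ≤ log N :=
    log_le_log (by linarith) (div_le_self (Nat.cast_nonneg N) (by exact_mod_cast hS))
  have hgap : (N / S - d : ℝ) * (1 + log (N / S)) ≤ 1 + log N :=
    calc (N / S - d : ℝ) * (1 + log (N / S)) ≤ 1 * (1 + log (N / S)) :=
          mul_le_mul_of_nonneg_right (by linarith) (by linarith [log_nonneg hx])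
      _ ≤ 1 + log N := by linarith
  have := mul_log_sub_mul_log_le (Nat.cast_nonneg d) hdx
  have := mul_log_le_mul_log (Nat.cast_nonneg d) hdx hx
  rw [abs_le]
  constructor <;> linarith [log_natCast_nonneg N]

lemma abs_sub_div_mul_log_div_le {N : ℕ} {S : ℝ} (hL : 1 ≤ log N) (hS : log N < S)
    (hS' : S ≤ log N + 1) : |N - N / S * log (N / S)| ≤ N / log N * (1 + log S) := by
  have hN : (0 : ℝ) < N := by
    by_contra! h
    have : (N : ℝ) = 0 := le_antisymm h (Nat.cast_nonneg N)
    rw [this, log_zero] at hL; linarith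
  have hS₀ : 0 < S := by linarith
  have hlogS : 0 ≤ log S := log_nonneg (by linarith)
  have key : (N : ℝ) - N / S * log (N / S) = N / S * (S - log N) + N / S * log S := by
    rw [log_div hN.ne' hS₀.ne']; field_simp; ring
  have hNS : (N : ℝ) / S ≤ N / log N := div_le_div_of_nonneg_left hN.le (by linarith) hS.le
  have h₁ : N / S * (S - log N) ≤ N / log N := by
    calc N / S * (S - log N) ≤ N / S * 1 := by gcongr; linarith
      _ ≤ N / log N := by rwa [mul_one]
  have h₂ : N / S * log S ≤ N / log N * log S := by gcongr
  rw [key, abs_of_nonneg (by have := sub_pos.2 hS; positivity)]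
  linarith

lemma sFn_le_log (N : ℕ) : (sFn N : ℝ) ≤ log N := Nat.floor_le (log_natCast_nonneg N)

lemma log_lt_sFn_add_one (N : ℕ) : log N < sFn N + 1 := Nat.lt_floor_add_one _

lemma sFn_lt {N : ℕ} (hN : N ≠ 0) : sFn N < N := by
  have := log_le_sub_one_of_pos (x := N) (by positivity)
  exact_mod_cast (sFn_le_log N).trans_lt (by linarith : log N < N)

lemma dFn_mul_add_rFn (N : ℕ) : dFn N * (sFn N + 1) + rFn N = N := by
  have := Nat.div_mul_le_self N (sFn N + 1)
  unfold rFn dFn at *; omega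

lemma rFn_lt (N : ℕ) : rFn N < sFn N + 1 := by
  rw [rFn, dFn, ← Nat.mod_eq_sub_div_mul]
  exact Nat.mod_lt _ (Nat.succ_pos _)

lemma dFn_pos {N : ℕ} (hN : N ≠ 0) : 0 < dFn N :=
  Nat.div_pos (sFn_lt hN) (Nat.succ_pos _)

lemma dFn_le_div_log {N : ℕ} (hL : 0 < log N) : (dFn N : ℝ) ≤ N / log N := by
  have hS : (0 : ℝ) < sFn N + 1 := by positivity
  have hdS : (dFn N : ℝ) * (sFn N + 1) ≤ N := by
    exact_mod_cast dFn_mul_add_rFn N ▸ Nat.le_add_right _ _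
  calc (dFn N : ℝ) ≤ N / (sFn N + 1) := (le_div_iff₀ hS).2 hdS
    _ ≤ N / log N := div_le_div_of_nonneg_left (Nat.cast_nonneg N) hL (log_lt_sFn_add_one N).le

lemma log_PN_eq {N : ℕ} (hd : 0 < dFn N) :
    log (PN N) = logBlockCount N (dFn N) (sFn N + 1) +
      if rFn N = 0 then 0
      else log (dFn N) + log (sFn N + 1)! - log (1 + sFn N + rFn N)! := by
  unfold PN logBlockCount
  split_ifs with hr
  · rw [log_div (by positivity) (by positivity), log_mul (by positivity) (by positivity),
      log_pow]
    ring
  · obtain ⟨d, hd'⟩ := Nat.exists_eq_add_of_lt hd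
    rw [hd', zero_add, Nat.add_sub_cancel, Nat.factorial_succ d, Nat.cast_mul]
    rw [log_div (by positivity) (by positivity), log_mul (by positivity) (by positivity),
      log_mul (by positivity) (by positivity), log_mul (by positivity) (by positivity),
      log_pow]
    push_cast
    ring

lemma abs_log_PN_sub_logBlockCount_le {N : ℕ} (hN : N ≠ 0) :
    |log (PN N) - logBlockCount N (dFn N) (sFn N + 1)| ≤ 2 * log N * (log N + 1) := by
  have hL := log_natCast_nonneg N
  rw [log_PN_eq (dFn_pos hN), add_sub_cancel_left]
  split_ifs with hr
  · simpa using by positivity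
  set T := 1 + sFn N + rFn N
  have hTN : T ≤ N := calc
    T = 1 * (sFn N + 1) + rFn N := by ring
    _ ≤ dFn N * (sFn N + 1) + rFn N := by gcongr; exact dFn_pos hN
    _ = N := dFn_mul_add_rFn N
  have hT : (T : ℝ) ≤ 2 * log N + 1 := by
    have hT' : T ≤ 2 * sFn N + 1 := by have := rFn_lt N; omega
    have : (T : ℝ) ≤ 2 * sFn N + 1 := by exact_mod_cast hT'
    linarith [sFn_le_log N]
  have hlogT : log T ! ≤ T * log N :=
    (log_factorial_le_mul_log T).trans (mul_le_mul_of_nonneg_left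
      (log_le_log (by positivity) (by exact_mod_cast hTN)) (Nat.cast_nonneg T))
  have hlogS : log (sFn N + 1)! ≤ log T ! :=
    log_le_log (by positivity) (by exact_mod_cast Nat.factorial_le (by omega))
  have hlogd : log (dFn N) ≤ log N :=
    log_le_log (by exact_mod_cast dFn_pos hN) (by exact_mod_cast Nat.div_le_self N _)
  have hTlog : (T : ℝ) * log N ≤ (2 * log N + 1) * log N := mul_le_mul_of_nonneg_right hT hL
  rw [abs_le]
  constructor <;> linarith [log_natCast_nonneg (dFn N), log_natCast_nonneg (sFn N + 1)!]

theorem abs_log_PN_sub_le {N : ℕ} (hL : 1 ≤ log N) :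
    |log (PN N) - N * (log N - log (log N) - 1)| ≤
      14 * log N ^ 2 + N * ((6 + 2 * log (log N)) / log N) := by
  have hN : N ≠ 0 := by rintro rfl; simp at hL; linarith
  have hdiv := dFn_mul_add_rFn N
  have hd := dFn_pos hN
  have hLS : log N < ((sFn N + 1 : ℕ) : ℝ) := by simpa using log_lt_sFn_add_one N
  have hSL : ((sFn N + 1 : ℕ) : ℝ) ≤ log N + 1 := by simpa using sFn_le_log N
  have hcorr := abs_le.1 (abs_log_PN_sub_logBlockCount_le hN)
  have hblock := abs_le.1 (abs_logBlockCount_sub_le hdiv (rFn_lt N) hd)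
  have hfloor := abs_le.1 (abs_div_mul_log_div_sub_mul_log_le hdiv (rFn_lt N) hd)
  have hmain := abs_le.1 (abs_sub_div_mul_log_div_le hL hLS hSL)
  have hdN := dFn_le_div_log (N := N) (by linarith)
  set L := log N
  set S : ℝ := ((sFn N + 1 : ℕ) : ℝ)
  have hN₀ : (0 : ℝ) ≤ N := Nat.cast_nonneg N
  have hNL₀ : 0 ≤ N / L := by positivity
  have hlogS : log S - log L ≤ 1 / L := by
    have := log_sub_log_le_div (by linarith) hLS.le
    exact this.trans (div_le_div_of_nonneg_right (by linarith) (by linarith))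
  have hNL : N * (log S - log L) ≤ N / L := by
    calc N * (log S - log L) ≤ N * (1 / L) := by gcongr
      _ = N / L := by ring
  have hNL' : 0 ≤ N * (log S - log L) :=
    mul_nonneg hN₀ (sub_nonneg.2 (log_le_log (by linarith) hLS.le))
  have hinvL : 1 / L ≤ 1 := (div_le_one (by linarith)).2 hL
  have h₁ : (dFn N : ℝ) * (2 + log S) ≤ N / L * (3 + log L) :=
    mul_le_mul hdN (by linarith) (by linarith [log_nonneg (by linarith : (1 : ℝ) ≤ S)]) hNL₀
  have h₂ : N / L * (1 + log S) ≤ N / L * (2 + log L) :=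
    mul_le_mul_of_nonneg_left (by linarith) hNL₀
  have h₃ : (2 + S) * (1 + L) ≤ (3 + L) * (1 + L) :=
    mul_le_mul_of_nonneg_right (by linarith) (by linarith)
  have h₄ : N * ((6 + 2 * log L) / L) = N / L * (3 + log L) + N / L * (2 + log L) + N / L := by
    field_simp; ring
  have hL₂ : L ≤ L ^ 2 := by nlinarith
  -- `log P_N - N (L - log L - 1)` telescopes through `logBlockCount`,
  -- `N L - N log S - d log d` and `(N / S) log (N / S)`.
  rw [abs_le]
  constructor <;> linarith

lemma tendsto_add_mul_log_div_atTop (a b : ℝ) :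
    Tendsto (fun x => (a + b * log x) / x) atTop (𝓝 0) := by
  have h := (tendsto_inv_atTop_zero.const_mul a).add
    (isLittleO_log_id_atTop.tendsto_div_nhds_zero.const_mul b)
  simp only [mul_zero, add_zero] at h
  exact h.congr fun x => by simp only [id, div_eq_mul_inv]; ring

/-- `ln P_N = N(ln N - ln ln N - 1 + o(1))` as `N → ∞`. -/
theorem PN_asymptotics :
    (fun N : ℕ =>
        Real.log (PN N) - (N : ℝ) * (Real.log N - Real.log (Real.log N) - 1))
      =o[Filter.atTop] fun N : ℕ => (N : ℝ) := by
  have hlog : Tendsto (fun N : ℕ => log N) atTop atTop :=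
    tendsto_log_atTop.comp tendsto_natCast_atTop_atTop
  have hpoly : (fun N : ℕ => 14 * log N ^ 2) =o[atTop] fun N : ℕ => (N : ℝ) :=
    (isLittleO_pow_log_id_atTop.comp_tendsto tendsto_natCast_atTop_atTop).const_mul_left 14
  have hlin : (fun N : ℕ => N * ((6 + 2 * log (log N)) / log N)) =o[atTop]
      fun N : ℕ => (N : ℝ) := by
    simpa using (isBigO_refl (fun N : ℕ => (N : ℝ)) atTop).mul_isLittleO
      ((isLittleO_one_iff ℝ).2 ((tendsto_add_mul_log_div_atTop 6 2).comp hlog))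
  refine IsBigO.trans_isLittleO (IsBigO.of_bound 1 ?_) (hpoly.add hlin)
  filter_upwards [hlog.eventually_ge_atTop 1] with N hN
  rw [one_mul, norm_eq_abs, norm_eq_abs]
  exact (abs_log_PN_sub_le hN).trans (le_abs_self _)
end

section
/- Let ξ_1,...,ξ_n be {0,1}-valued random variables such that for some p ∈ (0,1) and every subset S ⊆ {1,...,n}, P(ξ_i = 1 for all i ∈ S) ≤ p^{|S|}. Then for any γ ∈ (p, 1], P(∑_{i=1}^n ξ_i ≥ γn) ≤ exp(-n·D(γ‖p)), where D(γ‖p) = γ ln(γ/p) + (1-γ) ln((1-γ)/(1-p)). -/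
/-!
For Boolean `ξᵢ` one has `exp (t ξᵢ) = 1 + (eᵗ - 1) ξᵢ`, so expanding
`exp (t ∑ ξᵢ) = ∏ (1 + (eᵗ - 1) ξᵢ)` over subsets `S` writes the moment generating function as
`∑_S (eᵗ - 1)^|S| P(ξᵢ = 1 ∀ i ∈ S)`. The hypothesis bounds this by `(1 + (eᵗ - 1) p)ⁿ`, the value
for independent Bernoulli(`p`) variables, and the exponential Markov inequality with
`eᵗ = γ(1 - p) / (p(1 - γ))` gives `exp (-n D(γ‖p))`. For `γ = 1` the event is `{ξᵢ = 1 ∀ i}`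
itself, of probability at most `pⁿ`.
-/

open MeasureTheory ProbabilityTheory Finset Real

section

variable {Ω ι : Type*} {ξ : ι → Ω → ℕ}

theorem prod_cast_eq_indicator (hbool : ∀ i ω, ξ i ω = 0 ∨ ξ i ω = 1) (S : Finset ι) (ω : Ω) :
    ∏ i ∈ S, (ξ i ω : ℝ) = {ω | ∀ i ∈ S, ξ i ω = 1}.indicator 1 ω := by
  simp only [Set.indicator_apply, Set.mem_ofPred_eq, Pi.one_apply]
  split_ifs with h
  · exact prod_eq_one fun i hi => by simp [h i hi]
  · simp only [not_forall] at h
    obtain ⟨i, hi, hne⟩ := h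
    exact prod_eq_zero hi (by simp [(hbool i ω).resolve_right hne])

theorem measurableSet_forall_mem_eq_one [MeasurableSpace Ω] (hmeas : ∀ i, Measurable (ξ i))
    (S : Finset ι) :
    MeasurableSet {ω | ∀ i ∈ S, ξ i ω = 1} := by
  convert S.measurableSet_biInter fun i _ => hmeas i (measurableSet_singleton 1) using 1
  ext ω
  simp

variable [Fintype ι]

theorem exp_mul_sum_eq_sum_powerset (hbool : ∀ i ω, ξ i ω = 0 ∨ ξ i ω = 1) (t : ℝ) (ω : Ω) :
    exp (t * ∑ i, (ξ i ω : ℝ)) =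
      ∑ S ∈ univ.powerset, (exp t - 1) ^ #S * {ω | ∀ i ∈ S, ξ i ω = 1}.indicator 1 ω := by
  have hfactor : ∀ i, exp (t * ξ i ω) = 1 + (exp t - 1) * ξ i ω := fun i => by
    rcases hbool i ω with h | h <;> simp [h]
  simp_rw [mul_sum, exp_sum, hfactor, prod_one_add, prod_mul_distrib, prod_const,
    prod_cast_eq_indicator hbool]

variable [MeasurableSpace Ω] {μ : Measure Ω}

theorem integrable_exp_mul_sum [IsFiniteMeasure μ] (hmeas : ∀ i, Measurable (ξ i))
    (hbool : ∀ i ω, ξ i ω = 0 ∨ ξ i ω = 1) (t : ℝ) :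
    Integrable (fun ω => exp (t * ∑ i, (ξ i ω : ℝ))) μ := by
  simp_rw [exp_mul_sum_eq_sum_powerset hbool]
  exact integrable_finsetSum _ fun S _ =>
    ((integrable_const 1).indicator (measurableSet_forall_mem_eq_one hmeas S)).const_mul _

theorem mgf_sum_eq_sum_powerset [IsFiniteMeasure μ] (hmeas : ∀ i, Measurable (ξ i))
    (hbool : ∀ i ω, ξ i ω = 0 ∨ ξ i ω = 1) (t : ℝ) :
    mgf (fun ω => ∑ i, (ξ i ω : ℝ)) μ t =
      ∑ S ∈ univ.powerset, (exp t - 1) ^ #S * μ.real {ω | ∀ i ∈ S, ξ i ω = 1} := by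
  simp_rw [mgf, exp_mul_sum_eq_sum_powerset hbool]
  rw [integral_finsetSum _ fun S _ =>
    ((integrable_const 1).indicator (measurableSet_forall_mem_eq_one hmeas S)).const_mul _]
  simp_rw [integral_const_mul, integral_indicator_one (measurableSet_forall_mem_eq_one hmeas _)]

theorem mgf_sum_le [IsFiniteMeasure μ] (hmeas : ∀ i, Measurable (ξ i))
    (hbool : ∀ i ω, ξ i ω = 0 ∨ ξ i ω = 1) {p : ℝ} (hp : 0 ≤ p)
    (hneg : ∀ S : Finset ι, μ {ω | ∀ i ∈ S, ξ i ω = 1} ≤ ENNReal.ofReal (p ^ #S))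
    {t : ℝ} (ht : 0 ≤ t) :
    mgf (fun ω => ∑ i, (ξ i ω : ℝ)) μ t ≤ (1 + (exp t - 1) * p) ^ Fintype.card ι := by
  have hc : 0 ≤ exp t - 1 := by linarith [one_le_exp ht]
  calc mgf (fun ω => ∑ i, (ξ i ω : ℝ)) μ t
      = ∑ S ∈ univ.powerset, (exp t - 1) ^ #S * μ.real {ω | ∀ i ∈ S, ξ i ω = 1} :=
        mgf_sum_eq_sum_powerset hmeas hbool t
    _ ≤ ∑ S ∈ univ.powerset, (exp t - 1) ^ #S * p ^ #S := by
        gcongr with S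
        exact ENNReal.toReal_le_of_le_ofReal (by positivity) (hneg S)
    _ = (1 + (exp t - 1) * p) ^ Fintype.card ι := by
        simp_rw [← card_univ, ← prod_const, prod_one_add, prod_const, mul_pow]

theorem measureReal_sum_ge_le [IsFiniteMeasure μ] (hmeas : ∀ i, Measurable (ξ i))
    (hbool : ∀ i ω, ξ i ω = 0 ∨ ξ i ω = 1) {p : ℝ} (hp : 0 ≤ p)
    (hneg : ∀ S : Finset ι, μ {ω | ∀ i ∈ S, ξ i ω = 1} ≤ ENNReal.ofReal (p ^ #S))
    {t : ℝ} (ht : 0 ≤ t) (ε : ℝ) :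
    μ.real {ω | ε ≤ ∑ i, (ξ i ω : ℝ)} ≤
      exp (-t * ε) * (1 + (exp t - 1) * p) ^ Fintype.card ι :=
  (measure_ge_le_exp_mul_mgf ε ht (integrable_exp_mul_sum hmeas hbool t)).trans <|
    mul_le_mul_of_nonneg_left (mgf_sum_le hmeas hbool hp hneg ht) (exp_pos _).le

theorem measure_card_le_sum_le (hbool : ∀ i ω, ξ i ω = 0 ∨ ξ i ω = 1) {p : ℝ}
    (hneg : ∀ S : Finset ι, μ {ω | ∀ i ∈ S, ξ i ω = 1} ≤ ENNReal.ofReal (p ^ #S)) :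
    μ {ω | (Fintype.card ι : ℝ) ≤ ∑ i, (ξ i ω : ℝ)} ≤ ENNReal.ofReal (p ^ Fintype.card ι) := by
  refine (measure_mono fun ω hω i _ => ?_).trans (hneg univ)
  have hle : ∀ j ∈ univ, ξ j ω ≤ 1 := fun j _ => by rcases hbool j ω with h | h <;> simp [h]
  have hsum : ∑ j, ξ j ω = ∑ _j : ι, 1 := by
    refine le_antisymm (sum_le_sum hle) ?_
    simpa [← Nat.cast_sum] using hω
  exact (sum_eq_sum_iff_of_le hle).1 hsum i (mem_univ i)

end

theorem exp_neg_mul_mul_one_add_pow_eq {p γ t : ℝ} (hp : 0 < p) (hpγ : p < γ) (hγ : γ < 1)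
    (ht : exp t = γ * (1 - p) / (p * (1 - γ))) (n : ℕ) :
    exp (-t * (γ * n)) * (1 + (exp t - 1) * p) ^ n =
      exp (-n * (γ * log (γ / p) + (1 - γ) * log ((1 - γ) / (1 - p)))) := by
  have hγ0 : 0 < γ := hp.trans hpγ
  have h1γ : 0 < 1 - γ := by linarith
  have h1p : 0 < 1 - p := by linarith
  have hbase : 1 + (exp t - 1) * p = (1 - p) / (1 - γ) := by
    rw [ht]; field_simp; ring
  have hlog_t : t = log γ + log (1 - p) - (log p + log (1 - γ)) := by
    rw [← log_exp t, ht, log_div (by positivity) (by positivity), log_mul hγ0.ne' h1p.ne',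
      log_mul hp.ne' h1γ.ne']
  rw [hbase, ← exp_log (div_pos h1p h1γ), ← exp_nat_mul, ← exp_add, log_div h1p.ne' h1γ.ne',
    log_div hγ0.ne' hp.ne', log_div h1γ.ne' h1p.ne', hlog_t]
  ring_nf

theorem generalized_chernoff_general {Ω : Type*} [MeasurableSpace Ω]
    (μ : Measure Ω) [IsProbabilityMeasure μ] (n : ℕ) (ξ : Fin n → Ω → ℕ)
    (hmeas : ∀ i, Measurable (ξ i)) (hbool : ∀ i ω, ξ i ω = 0 ∨ ξ i ω = 1)
    (p : ℝ) (hp0 : 0 < p)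
    (hneg : ∀ S : Finset (Fin n),
      μ {ω | ∀ i ∈ S, ξ i ω = 1} ≤ ENNReal.ofReal (p ^ S.card))
    (γ : ℝ) (hγp : p < γ) (hγ1 : γ ≤ 1) :
    μ {ω | γ * n ≤ (∑ i, ξ i ω : ℝ)} ≤
      ENNReal.ofReal
        (Real.exp (-(n : ℝ) *
          (γ * Real.log (γ / p) + (1 - γ) * Real.log ((1 - γ) / (1 - p))))) := by
  rcases hγ1.eq_or_lt with rfl | hγ1
  · have hval : p ^ n = exp (-n * (1 * log (1 / p) + (1 - 1) * log ((1 - 1) / (1 - p)))) := by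
      rw [one_div, log_inv, sub_self, zero_mul, add_zero, one_mul, neg_mul_neg, exp_nat_mul,
        exp_log hp0]
    simpa [hval] using measure_card_le_sum_le hbool hneg
  · have hratio : 1 ≤ γ * (1 - p) / (p * (1 - γ)) := by
      rw [one_le_div (by nlinarith)]
      nlinarith
    set t := log (γ * (1 - p) / (p * (1 - γ)))
    have ht : exp t = γ * (1 - p) / (p * (1 - γ)) := exp_log (by linarith)
    rw [← ofReal_measureReal, ← exp_neg_mul_mul_one_add_pow_eq hp0 hγp hγ1 ht]
    gcongr
    simpa using measureReal_sum_ge_le hmeas hbool hp0.le hneg (log_nonneg hratio) (γ * n)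

/-- Generalized Chernoff bound for negatively correlated Boolean variables:
if `P(ξ_i = 1 ∀ i ∈ S) ≤ p^{|S|}` for every `S`, then for `γ ∈ (p, 1]`,
`P(∑ ξ_i ≥ γn) ≤ exp(-n D(γ‖p))`. -/
theorem generalized_chernoff {Ω : Type*} [MeasurableSpace Ω]
    (μ : Measure Ω) [IsProbabilityMeasure μ] (n : ℕ) (ξ : Fin n → Ω → ℕ)
    (hmeas : ∀ i, Measurable (ξ i)) (hbool : ∀ i ω, ξ i ω = 0 ∨ ξ i ω = 1)
    (p : ℝ) (hp0 : 0 < p) (hp1 : p < 1)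
    (hneg : ∀ S : Finset (Fin n),
      μ {ω | ∀ i ∈ S, ξ i ω = 1} ≤ ENNReal.ofReal (p ^ S.card))
    (γ : ℝ) (hγp : p < γ) (hγ1 : γ ≤ 1) :
    μ {ω | γ * n ≤ (∑ i, ξ i ω : ℝ)} ≤
      ENNReal.ofReal
        (Real.exp (-(n : ℝ) *
          (γ * Real.log (γ / p) + (1 - γ) * Real.log ((1 - γ) / (1 - p))))) :=
  generalized_chernoff_general μ n ξ hmeas hbool p hp0 hneg γ hγp hγ1
end
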